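/- arXiv:2211.13447 — 3 statements merged into one kernel-verified Lean document; each statement's English description precedes it below -/
import Mathlib

section
/- Let w be the width of an elimination order π for a base network G and let w^t be the width of the twin elimination order π^t for the twin network G^t. Then w^t ≤ 2w + 1. -/
namespace Counterfactual

attribute [local instance] Classical.propDecidable

noncomputable section

universe u v

variable {V : Type u}

variable {V : Type u}

/-- The directed graph given by edge relation `E` (`E p c` means `p` is a parent of `c`)
is acyclic, i.e. it is a DAG. -/
def IsAcyclicRel (E : V → V → Prop) : Prop := ∀ x, ¬ Relation.TransGen E x x

/-- `x` is a root of the DAG `E`: it has no parents.  Non-roots are called internal. -/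
def isRoot (E : V → V → Prop) (x : V) : Prop := ∀ p, ¬ E p x

/-- The family of variable `X` in the DAG `E`: `X` together with its parents. -/
def famOf (E : V → V → Prop) (X : V) : Set V := insert X {p | E p X}

/-- The moral graph of the DAG `E`: connect every pair of nodes having a common child,
then drop directions. -/
def moralGraph (E : V → V → Prop) : SimpleGraph V where
  Adj u w := u ≠ w ∧ (E u w ∨ E w u ∨ ∃ c, E u c ∧ E w c)
  symm := by
    constructor
    intro u w h
    obtain ⟨h1, h2⟩ := h
    refine ⟨Ne.symm h1, ?_⟩
    rcases h2 with h | h | ⟨c, hc1, hc2⟩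
    · exact Or.inr (Or.inl h)
    · exact Or.inl h
    · exact Or.inr (Or.inr ⟨c, hc2, hc1⟩)
  loopless := by
    constructor
    intro u h
    exact h.1 rfl

/-- Eliminating vertex `x` from an undirected graph: pairwise connect the neighbors
of `x`, then remove (isolate) `x`. -/
def eliminate (G : SimpleGraph V) (x : V) : SimpleGraph V where
  Adj u w := u ≠ w ∧ u ≠ x ∧ w ≠ x ∧ (G.Adj u w ∨ (G.Adj u x ∧ G.Adj x w))
  symm := by
    constructor
    intro u w h
    obtain ⟨h1, h2, h3, h4⟩ := h
    refine ⟨Ne.symm h1, h3, h2, ?_⟩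
    rcases h4 with h | ⟨ha, hb⟩
    · exact Or.inl h.symm
    · exact Or.inr ⟨hb.symm, ha.symm⟩
  loopless := by
    constructor
    intro u h
    exact h.1 rfl

/-- Eliminate a list of vertices, in order. -/
def elimList (G : SimpleGraph V) : List V → SimpleGraph V
  | [] => G
  | x :: xs => elimList (eliminate G x) xs

/-- The graph obtained from `G` after eliminating the first `i` variables of `π`. -/
def graphAt (G : SimpleGraph V) (π : List V) (i : ℕ) : SimpleGraph V :=
  elimList G (π.take i)

/-- `x` together with its neighbors in the undirected graph `G`. -/
def closedNbhd (G : SimpleGraph V) (x : V) : Set V := insert x {y | G.Adj x y}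

/-- An elimination order: a total ordering of all the variables. -/
def IsElimOrder (π : List V) : Prop := π.Nodup ∧ ∀ x : V, x ∈ π

/-- The cluster of variable `X` in the elimination process on the moral graph of `E`
induced by `π`: `X` together with its neighbors in the graph just before `X` is eliminated. -/
def clusterOf (E : V → V → Prop) (π : List V) (X : V) : Set V :=
  closedNbhd (graphAt (moralGraph E) π (π.idxOf X)) X

/-- The width of an elimination order: the size of its largest cluster minus one. -/
def orderWidth (E : V → V → Prop) (π : List V) : ℕ :=
  sSup {n : ℕ | ∃ X ∈ π, n = (clusterOf E π X).ncard} - 1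

/-- The treewidth of the DAG `E`: the minimum width attained by an elimination order. -/
def treewidthOf (E : V → V → Prop) : ℕ :=
  sInf {w : ℕ | ∃ π : List V, IsElimOrder π ∧ orderWidth E π = w}

/-! ### Twin networks -/

/-- The variables of the twin network of `E`: the base variables (`Sum.inl`) together
with a duplicate (`Sum.inr`) for every internal (non-root) variable. -/
abbrev TwinVar (E : V → V → Prop) : Type u := V ⊕ {x : V // ¬ isRoot E x}

/-- The duplicate `X'` of a variable `X`; by convention `X' = X` when `X` is a root. -/
def twinDup (E : V → V → Prop) (x : V) : TwinVar E :=
  if h : isRoot E x then Sum.inl x else Sum.inr ⟨x, h⟩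

/-- The edges of the twin network `G^t` of the base network `E`. -/
def twinEdge (E : V → V → Prop) (a b : TwinVar E) : Prop :=
  match a, b with
  | Sum.inl p, Sum.inl x => E p x
  | Sum.inl p, Sum.inr x => isRoot E p ∧ E p x.1
  | Sum.inr p, Sum.inr x => E p.1 x.1
  | Sum.inr _, Sum.inl _ => False

/-- The twin elimination order: replace each non-root variable `X` of `π`
by the two consecutive variables `X, X'`. -/
def twinOrder (E : V → V → Prop) (π : List V) : List (TwinVar E) :=
  π.foldr (fun x acc =>
    (if h : isRoot E x then [Sum.inl x] else [Sum.inl x, Sum.inr ⟨x, h⟩]) ++ acc) []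

/-- Eliminate the pair `{X, X'}` (a single variable when `X` is a root) from a graph
on the twin variables. -/
def elimTwinPair (E : V → V → Prop) (G : SimpleGraph (TwinVar E)) (x : V) :
    SimpleGraph (TwinVar E) :=
  if h : isRoot E x then eliminate G (Sum.inl x)
  else eliminate (eliminate G (Sum.inl x)) (Sum.inr ⟨x, h⟩)

/-- The twin graph sequence: `twinGraphAt E π i` is the graph obtained from the moral graph
of the twin network after eliminating the pairs `{π 0, (π 0)'}, …` for the first `i`
variables of `π`. -/
def twinGraphAt (E : V → V → Prop) (π : List V) (i : ℕ) : SimpleGraph (TwinVar E) :=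
  (π.take i).foldl (elimTwinPair E) (moralGraph (twinEdge E))

/-- The cluster of twin variable `Y` in the elimination process on the moral graph of the
twin network induced by the twin elimination order. -/
def twinClusterOf (E : V → V → Prop) (π : List V) (Y : TwinVar E) : Set (TwinVar E) :=
  clusterOf (twinEdge E) (twinOrder E π) Y

/-! ### Jointrees -/

/-- A leaf of a tree: a node with exactly one neighbor. -/
def IsLeaf {J : Type v} (T : SimpleGraph J) (j : J) : Prop := ∃! k, T.Adj j k

/-- A jointree for the DAG `E`: a tree `T` together with a host function `H` mapping
(the index `X` of) each family of `E` to a nonempty set of hosting nodes; only leaves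
may be hosts and each leaf hosts exactly one family. -/
structure Jointree (E : V → V → Prop) (J : Type v) where
  T : SimpleGraph J
  isTree : T.IsTree
  H : V → Set J
  hosts_nonempty : ∀ X : V, (H X).Nonempty
  hosts_leaf : ∀ (X : V) (j : J), j ∈ H X → IsLeaf T j
  leaf_host : ∀ j : J, IsLeaf T j → ∃! X : V, j ∈ H X

variable {E : V → V → Prop} {J : Type v}

/-- The variables appearing (in a family hosted by a leaf) on the `i`-side of the
tree edge `(i, j)`. -/
def sideVars (jt : Jointree E J) (i j : J) : Set V :=
  {X | ∃ (Y : V) (l : J), l ∈ jt.H Y ∧ X ∈ famOf E Y ∧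
    (jt.T.deleteEdges {s(i, j)}).Reachable i l}

/-- The separator of the tree edge `(i, j)`: the variables hosted on both sides. -/
def sepOf (jt : Jointree E J) (i j : J) : Set V :=
  sideVars jt i j ∩ sideVars jt j i

/-- The cluster of a jointree node: for a leaf, the family it hosts; for an internal
node, the union of the separators of its adjacent edges. -/
def clusterJT (jt : Jointree E J) (i : J) : Set V :=
  if IsLeaf jt.T i then ⋃ X ∈ {Y : V | i ∈ jt.H Y}, famOf E X
  else ⋃ j ∈ {j : J | jt.T.Adj i j}, sepOf jt i j

/-- The width of a jointree: the size of its largest cluster minus one. -/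
def widthJT (jt : Jointree E J) : ℕ := (⨆ i : J, (clusterJT jt i).ncard) - 1

/-- `l` is at or below `u` in the tree `T` rooted at `r`: `u` lies on every
(equivalently, on the unique) path from `r` to `l`. -/
def Below {J : Type v} (T : SimpleGraph J) (r u l : J) : Prop :=
  ∀ p : T.Walk r l, p.IsPath → u ∈ p.support

/-- Node `u` of the jointree is duplicated by Algorithm 1 (with root `r`): every leaf at
or below `u` hosts only families of internal variables. -/
def Duplicated (jt : Jointree E J) (r u : J) : Prop :=
  ∀ l : J, IsLeaf jt.T l → Below jt.T r u l → ∀ X : V, l ∈ jt.H X → ¬ isRoot E X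

/-- The nodes of the twin jointree produced by Algorithm 1: the original nodes
(`Sum.inl`) plus a duplicate (`Sum.inr`) of every duplicated node. -/
abbrev TwinJ (jt : Jointree E J) (r : J) := J ⊕ {u : J // Duplicated jt r u}

/-- Adjacency of the twin jointree produced by Algorithm 1: the original tree edges,
the duplicates of the duplicated edges, and the edges attaching the roots of the
duplicate subtrees to the parents of the corresponding duplicated subtree roots. -/
def twinTAdj (jt : Jointree E J) (r : J) : TwinJ jt r → TwinJ jt r → Prop
  | Sum.inl i, Sum.inl j => jt.T.Adj i j
  | Sum.inl i, Sum.inr v => jt.T.Adj i v.1 ∧ ¬ Duplicated jt r i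
  | Sum.inr u, Sum.inl j => jt.T.Adj u.1 j ∧ ¬ Duplicated jt r j
  | Sum.inr u, Sum.inr v => jt.T.Adj u.1 v.1

/-- The tree of the twin jointree produced by Algorithm 1. -/
def twinT (jt : Jointree E J) (r : J) : SimpleGraph (TwinJ jt r) where
  Adj := twinTAdj jt r
  symm := by
    constructor
    rintro (i | u) (j | v) h <;> simp only [twinTAdj] at h ⊢
    · exact jt.T.adj_symm h
    · exact ⟨jt.T.adj_symm h.1, h.2⟩
    · exact ⟨jt.T.adj_symm h.1, h.2⟩
    · exact jt.T.adj_symm h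
  loopless := by
    constructor
    rintro (i | u) h <;> simp only [twinTAdj] at h
    · exact jt.T.irrefl h
    · exact jt.T.irrefl h

/-- The host function of the twin jointree produced by Algorithm 1: a base family is
hosted by the original hosts of the corresponding base family, and a duplicate family is
hosted by the duplicates of the hosts of the corresponding base family. -/
def twinH (jt : Jointree E J) (r : J) : TwinVar E → Set (TwinJ jt r) :=
  fun a =>
    match a with
    | Sum.inl X => Sum.inl '' jt.H X
    | Sum.inr x => {b | ∃ (l : J) (hl : Duplicated jt r l),
        l ∈ jt.H x.1 ∧ b = Sum.inr ⟨l, hl⟩}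

/-- The copy of jointree node `i` on the duplicate side: its duplicate if `i` is
duplicated, and `i` itself otherwise. -/
def dupJ (jt : Jointree E J) (r i : J) : TwinJ jt r :=
  if h : Duplicated jt r i then Sum.inr ⟨i, h⟩ else Sum.inl i

/-! ### Thinning -/

/-- Thinning rule 1 for removing the functional variable `X` from the separator of
edge `(i,j)`: the edge lies on a path between two leaves hosting the family of `X`,
and every separator on this path contains `X`. -/
def Rule1 (jt : Jointree E J) (S : J → J → Set V) (i j : J) (X : V) : Prop :=
  ∃ (l m : J) (p : jt.T.Walk l m), p.IsPath ∧ l ∈ jt.H X ∧ m ∈ jt.H X ∧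
    s(i, j) ∈ p.edges ∧ ∀ a b : J, s(a, b) ∈ p.edges → X ∈ S a b

/-- Thinning rule 2 for removing the variable `X` from the separator of edge `(i,j)`:
no other separator adjacent to `i` contains `X`, or no other separator adjacent to `j`
contains `X`. -/
def Rule2 (jt : Jointree E J) (S : J → J → Set V) (i j : J) (X : V) : Prop :=
  (∀ k : J, jt.T.Adj i k → k ≠ j → X ∉ S i k) ∨
  (∀ k : J, jt.T.Adj j k → k ≠ i → X ∉ S j k)

/-- One valid thinning step on a separator assignment: remove a functional
(here: internal, as in an SCM) variable `X` from the separator of an edge `(i,j)`,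
as licensed by one of the two thinning rules. -/
def ThinStep (jt : Jointree E J) (S S' : J → J → Set V) : Prop :=
  ∃ (i j : J) (X : V), jt.T.Adj i j ∧ ¬ isRoot E X ∧ X ∈ S i j ∧
    (Rule1 jt S i j X ∨ Rule2 jt S i j X) ∧
    S' = fun a b => if (a = i ∧ b = j) ∨ (a = j ∧ b = i) then S a b \ {X} else S a b

/-- `S` is the separator assignment of a thinned jointree obtained from `jt`:
it is reachable from the separators of `jt` by valid thinning steps, applied
to exhaustion. -/
def IsThinning (jt : Jointree E J) (S : J → J → Set V) : Prop :=
  Relation.ReflTransGen (ThinStep jt) (fun i j => sepOf jt i j) S ∧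
    ∀ S', ¬ ThinStep jt S S'

/-- The cluster of a node of a thinned jointree with separator assignment `S`. -/
def thClusterJT (jt : Jointree E J) (S : J → J → Set V) (i : J) : Set V :=
  if IsLeaf jt.T i then ⋃ X ∈ {Y : V | i ∈ jt.H Y}, famOf E X
  else ⋃ j ∈ {j : J | jt.T.Adj i j}, S i j

/-- The width of a thinned jointree with separator assignment `S`. -/
def thWidthJT (jt : Jointree E J) (S : J → J → Set V) : ℕ :=
  (⨆ i : J, (thClusterJT jt S i).ncard) - 1

/-- The causal treewidth of the DAG `E` whose internal variables are all functional:
the minimum width attained by a thinned jointree for `E`. -/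
def causalTreewidth (E : V → V → Prop) : ℕ :=
  sInf {w : ℕ | ∃ (J : Type u) (_ : Finite J) (jt : Jointree E J) (S : J → J → Set V),
    IsThinning jt S ∧ thWidthJT jt S = w}

/-- The thinned separator assignment for the twin jointree produced by Algorithm 1,
obtained from a thinned separator assignment `S` of the base jointree:
`S^t = S` on duplicated edges, `S^t = S'` on duplicate edges, and
`S^t = S ∪ S'` on invariant edges. -/
def twinSep (jt : Jointree E J) (r : J) (S : J → J → Set V) :
    TwinJ jt r → TwinJ jt r → Set (TwinVar E)
  | Sum.inl i, Sum.inl j =>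
      if Duplicated jt r i ∨ Duplicated jt r j then Sum.inl '' S i j
      else Sum.inl '' S i j ∪ twinDup E '' S i j
  | Sum.inl i, Sum.inr v => twinDup E '' S i v.1
  | Sum.inr u, Sum.inl j => twinDup E '' S u.1 j
  | Sum.inr u, Sum.inr v => twinDup E '' S u.1 v.1

/-! ### N-world networks -/

/-- The variables of the `N`-world network of a base network with variables `V`,
with respect to a set `R` of roots: the variables in `R` (`Sum.inl`) stay unreplicated,
and each variable outside `R` is replaced by `N` duplicates (`Sum.inr`). -/
abbrev NVar (R : Set V) (N : ℕ) : Type u := {x : V // x ∈ R} ⊕ ({x : V // x ∉ R} × Fin N)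

/-- The `k`-th duplicate `X^k` of variable `X`; by convention `X^k = X` when `X ∈ R`. -/
def ndup (R : Set V) (N : ℕ) (x : V) (k : Fin N) : NVar R N :=
  if h : x ∈ R then Sum.inl ⟨x, h⟩ else Sum.inr (⟨x, h⟩, k)

/-- The edges of the `N`-world network `G^N` of the base network `E` with respect to the
set of roots `R`: a parent `P ∈ R` of `X` is a parent of every duplicate `X^k`, while a
parent `P ∉ R` of `X` yields the edges `P^k → X^k`. -/
def nEdge (E : V → V → Prop) (R : Set V) (N : ℕ) (a b : NVar R N) : Prop :=
  match a, b with
  | Sum.inl p, Sum.inr x => E p.1 x.1.1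
  | Sum.inr p, Sum.inr x => E p.1.1 x.1.1 ∧ p.2 = x.2
  | _, _ => False

/-- Eliminate all `N` duplicates `x^1, …, x^N` of `x` (a single variable when `x ∈ R`). -/
def elimNBlock (R : Set V) (N : ℕ) (G : SimpleGraph (NVar R N)) (x : V) :
    SimpleGraph (NVar R N) :=
  if h : x ∈ R then eliminate G (Sum.inl ⟨x, h⟩)
  else (List.ofFn (fun k : Fin N => (Sum.inr (⟨x, h⟩, k) : NVar R N))).foldl eliminate G

/-- The `N`-world elimination order obtained from `π`: replace each variable `x ∉ R`
by its `N` duplicates `x^1, …, x^N`. -/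
def nOrder (R : Set V) (N : ℕ) (π : List V) : List (NVar R N) :=
  π.foldr (fun x acc =>
    (if h : x ∈ R then [(Sum.inl ⟨x, h⟩ : NVar R N)]
     else List.ofFn (fun k : Fin N => (Sum.inr (⟨x, h⟩, k) : NVar R N))) ++ acc) []

/-! ### Generalized N-world networks -/

/-- The variables of a generalized `N`-world network: nodes outside the duplicated set `D`
stay unreplicated, and each node in `D` is replaced by `N` duplicates. -/
abbrev GNVar (D : Set V) (N : ℕ) : Type u := {x : V // x ∉ D} ⊕ ({x : V // x ∈ D} × Fin N)

/-- The edges of a generalized `N`-world network of the base network `E` with respect to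
the duplicated set `D` and the optional extra edges `ex` between duplicates (an edge from
`X^i` to `X^j` is added when `i < j` and `ex X i j` holds). -/
def gnEdge (E : V → V → Prop) (D : Set V) (N : ℕ) (ex : V → Fin N → Fin N → Prop)
    (a b : GNVar D N) : Prop :=
  match a, b with
  | Sum.inl p, Sum.inl x => E p.1 x.1
  | Sum.inl p, Sum.inr x => E p.1 x.1.1
  | Sum.inr p, Sum.inr x =>
      (E p.1.1 x.1.1 ∧ p.2 = x.2) ∨ (p.1.1 = x.1.1 ∧ p.2 < x.2 ∧ ex x.1.1 p.2 x.2)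
  | Sum.inr _, Sum.inl _ => False


/-- The `N`-world graph sequence: the graph obtained from the moral graph of the
`N`-world network after eliminating all duplicates of the first `i` variables of `π`. -/
def nGraphAt (E : V → V → Prop) (R : Set V) (N : ℕ) (π : List V) (i : ℕ) :
    SimpleGraph (NVar R N) :=
  (π.take i).foldl (elimNBlock R N) (moralGraph (nEdge E R N))

/-- The cluster of an `N`-world variable `Y` in the elimination process on the moral
graph of the `N`-world network induced by the `N`-world elimination order. -/
def nClusterOf (E : V → V → Prop) (R : Set V) (N : ℕ) (π : List V) (Y : NVar R N) :
    Set (NVar R N) :=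
  clusterOf (nEdge E R N) (nOrder R N π) Y

end



/-! ### Auxiliary development for STATEMENT 2 -/

section TwinWidthAux

variable {V : Type u}

/-- Projection from twin variables back to base variables. -/
def tproj (E : V → V → Prop) : TwinVar E → V
  | Sum.inl x => x
  | Sum.inr x => x.1

lemma tproj_eq_x {E : V → V → Prop} {a : TwinVar E} {x : V}
    (h : tproj E a = x) : a = Sum.inl x ∨ ∃ hx : ¬ isRoot E x, a = Sum.inr ⟨x, hx⟩ := by
  cases a with
  | inl y => simp [tproj] at h; subst h; exact Or.inl rfl
  | inr y =>
      obtain ⟨y, hy⟩ := y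
      simp [tproj] at h; subst h; exact Or.inr ⟨hy, rfl⟩

lemma twinEdge_tproj {E : V → V → Prop} {a b : TwinVar E} (h : twinEdge E a b) :
    E (tproj E a) (tproj E b) := by
  cases a <;> cases b <;> simp [twinEdge, tproj] at h ⊢ <;> tauto

/-- Covering invariant: adjacency in the twin-side graph projects to adjacency in the
base-side graph (or the endpoints are the two copies of the same variable). -/
def Cov (E : V → V → Prop) (G : SimpleGraph V) (H : SimpleGraph (TwinVar E)) : Prop :=
  ∀ a b, H.Adj a b → tproj E a = tproj E b ∨ G.Adj (tproj E a) (tproj E b)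

lemma cov_moral (E : V → V → Prop) :
    Cov E (moralGraph E) (moralGraph (twinEdge E)) := by
  intro a b hab
  by_cases hp : tproj E a = tproj E b
  · exact Or.inl hp
  obtain ⟨hne, h⟩ := hab
  refine Or.inr ⟨hp, ?_⟩
  rcases h with h | h | ⟨c, h1, h2⟩
  · exact Or.inl (twinEdge_tproj h)
  · exact Or.inr (Or.inl (twinEdge_tproj h))
  · exact Or.inr (Or.inr ⟨tproj E c, twinEdge_tproj h1, twinEdge_tproj h2⟩)

lemma cov_elim_root {E : V → V → Prop} {G : SimpleGraph V} {H : SimpleGraph (TwinVar E)}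
    (hc : Cov E G H) {x : V} (hx : isRoot E x) :
    Cov E (eliminate G x) (eliminate H (Sum.inl x)) := by
  intro a b hab
  by_cases hp : tproj E a = tproj E b
  · exact Or.inl hp
  obtain ⟨hne, ha, hb, h⟩ := hab
  have hfib : ∀ c : TwinVar E, tproj E c = x → c = Sum.inl x := by
    intro c hcx
    rcases tproj_eq_x hcx with h' | ⟨hx', _⟩
    · exact h'
    · exact absurd hx hx'
  have hax : tproj E a ≠ x := fun h' => ha (hfib a h')
  have hbx : tproj E b ≠ x := fun h' => hb (hfib b h')
  refine Or.inr ⟨hp, hax, hbx, ?_⟩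
  rcases h with h | ⟨h1, h2⟩
  · rcases hc a b h with h' | h'
    · exact absurd h' hp
    · exact Or.inl h'
  · rcases hc a (Sum.inl x) h1 with h1' | h1'
    · exact absurd (hfib a h1') ha
    · rcases hc (Sum.inl x) b h2 with h2' | h2'
      · exact absurd (hfib b h2'.symm) hb
      · exact Or.inr ⟨h1', h2'⟩

lemma cov_elim_pair {E : V → V → Prop} {G : SimpleGraph V} {H : SimpleGraph (TwinVar E)}
    (hc : Cov E G H) {x : V} (hx : ¬ isRoot E x) :
    Cov E (eliminate G x)
      (eliminate (eliminate H (Sum.inl x)) (Sum.inr ⟨x, hx⟩)) := by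
  -- first, adjacency to x in either copy projects to adjacency to x in G
  have key : ∀ a : TwinVar E, a ≠ Sum.inl x → a ≠ Sum.inr ⟨x, hx⟩ →
      ∀ c : TwinVar E, tproj E c = x →
      (eliminate H (Sum.inl x)).Adj a c ∨ H.Adj a c → G.Adj (tproj E a) x := by
    intro a ha1 ha2 c hcx hadj
    have hax : tproj E a ≠ x := by
      intro h'
      rcases tproj_eq_x h' with h'' | ⟨hx', h''⟩
      · exact ha1 h''
      · exact ha2 h''
    have base : ∀ d : TwinVar E, H.Adj a d → tproj E d = x → G.Adj (tproj E a) x := by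
      intro d hd hdx
      rcases hc a d hd with h' | h'
      · exact absurd (h'.trans hdx) hax
      · exact hdx ▸ h'
    rcases hadj with ⟨_, _, _, hor⟩ | h
    · rcases hor with h | ⟨h1, _⟩
      · exact base c h hcx
      · exact base (Sum.inl x) h1 rfl
    · exact base c h hcx
  intro a b hab
  by_cases hp : tproj E a = tproj E b
  · exact Or.inl hp
  obtain ⟨hne, ha2, hb2, h⟩ := hab
  have haux : ∀ d : TwinVar E, d ≠ Sum.inr ⟨x, hx⟩ →
      (eliminate H (Sum.inl x)).Adj d (Sum.inr ⟨x, hx⟩) ∨ True → True := fun _ _ _ => trivial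
  -- extract a ≠ inl x and b ≠ inl x from the inner elimination when used
  rcases h with hin | ⟨h1, h2⟩
  · -- adjacency already in (eliminate H (inl x))
    obtain ⟨_, ha1, hb1, hor⟩ := hin
    have hax : tproj E a ≠ x := by
      intro h'
      rcases tproj_eq_x h' with h'' | ⟨hx', h''⟩
      · exact ha1 h''
      · exact ha2 h''
    have hbx : tproj E b ≠ x := by
      intro h'
      rcases tproj_eq_x h' with h'' | ⟨hx', h''⟩
      · exact hb1 h''
      · exact hb2 h''
    refine Or.inr ⟨hp, hax, hbx, ?_⟩
    rcases hor with h | ⟨ha', hb'⟩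
    · rcases hc a b h with h' | h'
      · exact absurd h' hp
      · exact Or.inl h'
    · have hga : G.Adj (tproj E a) x := by
        rcases hc a (Sum.inl x) ha' with h' | h'
        · exact absurd h' hax
        · exact h'
      have hgb : G.Adj (tproj E b) x := by
        rcases hc (Sum.inl x) b hb' with h' | h'
        · exact absurd h'.symm hbx
        · exact h'.symm
      exact Or.inr ⟨hga, hgb.symm⟩
  · -- through the duplicate (inr) vertex
    have ha1 : a ≠ Sum.inl x := h1.2.1
    have hb1 : b ≠ Sum.inl x := h2.2.2.1
    have hax : tproj E a ≠ x := by
      intro h'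
      rcases tproj_eq_x h' with h'' | ⟨hx', h''⟩
      · exact ha1 h''
      · exact ha2 h''
    have hbx : tproj E b ≠ x := by
      intro h'
      rcases tproj_eq_x h' with h'' | ⟨hx', h''⟩
      · exact hb1 h''
      · exact hb2 h''
    have hga : G.Adj (tproj E a) x :=
      key a ha1 ha2 (Sum.inr ⟨x, hx⟩) rfl (Or.inl h1)
    have hgb : G.Adj (tproj E b) x :=
      key b hb1 hb2 (Sum.inr ⟨x, hx⟩) rfl (Or.inl h2.symm)
    exact Or.inr ⟨hp, hax, hbx, Or.inr ⟨hga, hgb.symm⟩⟩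

/-- The block of twin variables corresponding to a base variable. -/
noncomputable def tblock (E : V → V → Prop) (x : V) : List (TwinVar E) :=
  if h : isRoot E x then [Sum.inl x] else [Sum.inl x, Sum.inr ⟨x, h⟩]

lemma twinOrder_cons (E : V → V → Prop) (x : V) (l : List V) :
    twinOrder E (x :: l) = tblock E x ++ twinOrder E l := rfl

lemma twinOrder_append (E : V → V → Prop) (l1 l2 : List V) :
    twinOrder E (l1 ++ l2) = twinOrder E l1 ++ twinOrder E l2 := by
  induction l1 with
  | nil => rfl
  | cons x t ih =>
      simp only [List.cons_append, twinOrder_cons, ih, List.append_assoc]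

lemma mem_twinOrder_tproj {E : V → V → Prop} {l : List V} {Y : TwinVar E}
    (h : Y ∈ twinOrder E l) : tproj E Y ∈ l := by
  induction l with
  | nil => simp [twinOrder] at h
  | cons x t ih =>
      rw [twinOrder_cons] at h
      rcases List.mem_append.1 h with h | h
      · unfold tblock at h
        split at h <;> simp at h <;>
          first
            | (subst h; simp [tproj])
            | (rcases h with h | h <;> subst h <;> simp [tproj])
      · exact List.mem_cons_of_mem _ (ih h)

lemma elimList_append {W : Type*} (G : SimpleGraph W) (l1 l2 : List W) :
    elimList G (l1 ++ l2) = elimList (elimList G l1) l2 := by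
  induction l1 generalizing G with
  | nil => rfl
  | cons x t ih => exact ih (eliminate G x)

lemma cov_elimList {E : V → V → Prop} (l : List V)
    {G : SimpleGraph V} {H : SimpleGraph (TwinVar E)} (hc : Cov E G H) :
    Cov E (elimList G l) (elimList H (twinOrder E l)) := by
  induction l generalizing G H with
  | nil => exact hc
  | cons x t ih =>
      rw [twinOrder_cons, elimList_append]
      show Cov E (elimList (eliminate G x) t) _
      rcases Classical.em (isRoot E x) with h | h
      · simp only [tblock, dif_pos h]
        exact ih (cov_elim_root hc h)
      · simp only [tblock, dif_neg h]
        exact ih (cov_elim_pair hc h)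

lemma closedNbhd_inl_subset {E : V → V → Prop} {G : SimpleGraph V}
    {H : SimpleGraph (TwinVar E)} (hc : Cov E G H) (x : V) :
    closedNbhd H (Sum.inl x) ⊆ tproj E ⁻¹' closedNbhd G x := by
  rintro a ha
  rcases ha with rfl | ha
  · exact Set.mem_insert _ _
  · rcases hc (Sum.inl x) a ha with h | h
    · exact Or.inl h.symm
    · exact Or.inr h

lemma closedNbhd_inr_subset {E : V → V → Prop} {G : SimpleGraph V}
    {H : SimpleGraph (TwinVar E)} (hc : Cov E G H) (x : V) (hx : ¬ isRoot E x) :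
    closedNbhd (eliminate H (Sum.inl x)) (Sum.inr ⟨x, hx⟩) ⊆
      tproj E ⁻¹' closedNbhd G x := by
  rintro a ha
  rcases ha with rfl | ha
  · exact Set.mem_insert _ _
  · obtain ⟨_, _, _, hor⟩ := ha
    have base : ∀ d : TwinVar E, H.Adj d a → tproj E d = x →
        tproj E a ∈ closedNbhd G x := by
      intro d hd hdx
      rcases hc d a hd with h | h
      · exact Or.inl (hdx ▸ h.symm)
      · exact Or.inr (hdx ▸ h)
    rcases hor with h | ⟨_, h2⟩
    · exact base (Sum.inr ⟨x, hx⟩) h rfl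
    · exact base (Sum.inl x) h2 rfl

lemma ncard_tproj_preimage_le {E : V → V → Prop} [Fintype V] (C : Set V) :
    (tproj E ⁻¹' C).ncard ≤ 2 * C.ncard := by
  have hfin : (Finite V) := inferInstance
  have hsub : tproj E ⁻¹' C ⊆ (Sum.inl '' C) ∪ (twinDup E '' C) := by
    rintro a ha
    cases a with
    | inl y => exact Or.inl ⟨y, ha, rfl⟩
    | inr y =>
        obtain ⟨y, hy⟩ := y
        refine Or.inr ⟨y, ha, ?_⟩
        simp [twinDup, hy]
  calc (tproj E ⁻¹' C).ncard ≤ ((Sum.inl '' C) ∪ (twinDup E '' C)).ncard :=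
        Set.ncard_le_ncard hsub (Set.toFinite _)
    _ ≤ (Sum.inl '' C : Set (TwinVar E)).ncard + (twinDup E '' C).ncard :=
        Set.ncard_union_le _ _
    _ ≤ C.ncard + C.ncard :=
        Nat.add_le_add (Set.ncard_image_le (Set.toFinite _))
          (Set.ncard_image_le (Set.toFinite _))
    _ = 2 * C.ncard := by ring


lemma twinOrder_cons_root {E : V → V → Prop} {y : V} (h : isRoot E y) (t : List V) :
    twinOrder E (y :: t) = Sum.inl y :: twinOrder E t := by
  rw [twinOrder_cons]; simp [tblock, h]

lemma twinOrder_cons_nonroot {E : V → V → Prop} {y : V} (h : ¬ isRoot E y) (t : List V) :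
    twinOrder E (y :: t) = Sum.inl y :: Sum.inr ⟨y, h⟩ :: twinOrder E t := by
  rw [twinOrder_cons]; simp [tblock, h]

lemma idxw_append {α : Type u} {D : DecidableEq α} {a : α} {l1 : List α} (l2 : List α)
    (h : a ∉ l1) :
    @List.idxOf α (@instBEqOfDecidableEq α D) a (l1 ++ l2) =
      l1.length + @List.idxOf α (@instBEqOfDecidableEq α D) a l2 := by
  letI := D; exact List.idxOf_append_of_notMem h

lemma idxw_cons_self {α : Type u} {D : DecidableEq α} (a : α) (l : List α) :
    @List.idxOf α (@instBEqOfDecidableEq α D) a (a :: l) = 0 := by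
  letI := D; exact List.idxOf_cons_self

lemma idxw_cons_ne {α : Type u} {D : DecidableEq α} {a b : α} (l : List α) (h : b ≠ a) :
    @List.idxOf α (@instBEqOfDecidableEq α D) a (b :: l) =
      @List.idxOf α (@instBEqOfDecidableEq α D) a l + 1 := by
  letI := D; exact List.idxOf_cons_ne l h

lemma take_len_succ {α : Type u} (A : List α) (b c : α) (C : List α) :
    (A ++ b :: c :: C).take (A.length + 1) = A ++ [b] := by
  rw [List.take_append, List.take_of_length_le (Nat.le_succ _)]
  simp

lemma elimList_singleton {W : Type v} (G : SimpleGraph W) (x : W) :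
    elimList G [x] = eliminate G x := rfl

lemma twin_cluster_subset {E : V → V → Prop} {π : List V} (hnd : π.Nodup)
    {Y : TwinVar E} (hY : Y ∈ twinOrder E π) :
    clusterOf (twinEdge E) (twinOrder E π) Y ⊆
      tproj E ⁻¹' clusterOf E π (tproj E Y) := by
  have prelim : ∀ y : V, y ∈ π →
      π.drop (π.idxOf y) = y :: π.drop (π.idxOf y + 1) ∧
      y ∉ π.take (π.idxOf y) ∧
      twinOrder E π =
        twinOrder E (π.take (π.idxOf y)) ++ twinOrder E (π.drop (π.idxOf y)) := by
    intro y hxπ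
    have hilt : π.idxOf y < π.length := List.idxOf_lt_length_iff.2 hxπ
    have hget : π[π.idxOf y] = y := List.getElem_idxOf hilt
    have hdrop : π.drop (π.idxOf y) = y :: π.drop (π.idxOf y + 1) := by
      rw [List.drop_eq_getElem_cons hilt, hget]
    refine ⟨hdrop, ?_, ?_⟩
    · have h2 : (π.take (π.idxOf y) ++ π.drop (π.idxOf y)).Nodup := by
        rw [List.take_append_drop]; exact hnd
      have hdj := (List.nodup_append.1 h2).2.2
      intro hmem
      exact hdj y hmem y (hdrop ▸ List.mem_cons_self) rfl
    · rw [← twinOrder_append, List.take_append_drop]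
  rcases Y with y | ⟨y, hy⟩
  · -- case Y = Sum.inl y
    have hxπ : y ∈ π := mem_twinOrder_tproj hY
    obtain ⟨hdrop, hnotTake, hsplit⟩ := prelim y hxπ
    have hcov : Cov E (elimList (moralGraph E) (π.take (π.idxOf y)))
        (elimList (moralGraph (twinEdge E)) (twinOrder E (π.take (π.idxOf y)))) :=
      cov_elimList _ (cov_moral E)
    have hnl : (Sum.inl y : TwinVar E) ∉ twinOrder E (π.take (π.idxOf y)) :=
      fun h => hnotTake (mem_twinOrder_tproj h)
    intro a ha
    unfold clusterOf graphAt at ha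
    rw [hsplit, idxw_append _ hnl, hdrop] at ha
    rcases Classical.em (isRoot E y) with h | h
    · rw [twinOrder_cons_root h, idxw_cons_self, Nat.add_zero, List.take_left] at ha
      exact closedNbhd_inl_subset hcov y ha
    · rw [twinOrder_cons_nonroot h, idxw_cons_self, Nat.add_zero, List.take_left] at ha
      exact closedNbhd_inl_subset hcov y ha
  · -- case Y = Sum.inr ⟨y, hy⟩
    have hxπ : y ∈ π := mem_twinOrder_tproj hY
    obtain ⟨hdrop, hnotTake, hsplit⟩ := prelim y hxπ
    have hcov : Cov E (elimList (moralGraph E) (π.take (π.idxOf y)))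
        (elimList (moralGraph (twinEdge E)) (twinOrder E (π.take (π.idxOf y)))) :=
      cov_elimList _ (cov_moral E)
    have hnr : (Sum.inr ⟨y, hy⟩ : TwinVar E) ∉ twinOrder E (π.take (π.idxOf y)) :=
      fun h => hnotTake (mem_twinOrder_tproj h)
    intro a ha
    unfold clusterOf graphAt at ha
    rw [hsplit, idxw_append _ hnr, hdrop, twinOrder_cons_nonroot hy,
      idxw_cons_ne _ (by simp), idxw_cons_self, Nat.zero_add,
      take_len_succ, elimList_append, elimList_singleton] at ha
    exact closedNbhd_inr_subset hcov y hy ha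

end TwinWidthAux

/-- the width of the twin elimination order is at most twice the width of
the base elimination order plus one. -/
theorem twin_order_width_le {V : Type*} [Fintype V]
    (E : V → V → Prop) (hE : IsAcyclicRel E)
    (π : List V) (hπ : IsElimOrder π) :
    orderWidth (twinEdge E) (twinOrder E π) ≤ 2 * orderWidth E π + 1 := by
  obtain ⟨hnd, hmem⟩ := hπ
  have hBbdd : BddAbove {n : ℕ | ∃ X ∈ π, n = (clusterOf E π X).ncard} := by
    refine ⟨Fintype.card V, ?_⟩
    rintro n ⟨X, hX, rfl⟩
    have h1 : (clusterOf E π X).ncard ≤ (Set.univ : Set V).ncard :=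
      Set.ncard_le_ncard (Set.subset_univ _) Set.finite_univ
    simpa [Set.ncard_univ, Nat.card_eq_fintype_card] using h1
  have key : ∀ n ∈ {n : ℕ | ∃ Y ∈ twinOrder E π,
      n = (clusterOf (twinEdge E) (twinOrder E π) Y).ncard},
      n ≤ 2 * sSup {n : ℕ | ∃ X ∈ π, n = (clusterOf E π X).ncard} := by
    rintro n ⟨Y, hY, rfl⟩
    have hsub := twin_cluster_subset hnd hY
    have h1 : (clusterOf (twinEdge E) (twinOrder E π) Y).ncard ≤
        (tproj E ⁻¹' clusterOf E π (tproj E Y)).ncard :=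
      Set.ncard_le_ncard hsub (Set.toFinite _)
    have h2 := ncard_tproj_preimage_le (E := E) (clusterOf E π (tproj E Y))
    have h3 : (clusterOf E π (tproj E Y)).ncard ≤
        sSup {n : ℕ | ∃ X ∈ π, n = (clusterOf E π X).ncard} :=
      le_csSup hBbdd ⟨tproj E Y, mem_twinOrder_tproj hY, rfl⟩
    omega
  have hsup : sSup {n : ℕ | ∃ Y ∈ twinOrder E π,
      n = (clusterOf (twinEdge E) (twinOrder E π) Y).ncard} ≤
      2 * sSup {n : ℕ | ∃ X ∈ π, n = (clusterOf E π X).ncard} := by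
    rcases Set.eq_empty_or_nonempty {n : ℕ | ∃ Y ∈ twinOrder E π,
        n = (clusterOf (twinEdge E) (twinOrder E π) Y).ncard} with he | hne
    · rw [he, csSup_empty]
      exact bot_le
    · exact csSup_le hne key
  unfold orderWidth
  omega

end Counterfactual
end

section
/- If w is the causal treewidth of a base network G (all of whose internal variables are functional) and w^t is the causal treewidth of its N-world network G^N (with respect to any subset R of roots of G and any integer N ≥ 1), then w^t ≤ N(w + 1) − 1. -/
namespace Counterfactual

attribute [local instance] Classical.propDecidable

noncomputable section AuxThinning

universe u' v'

variable {V : Type u'} {J : Type v'} {E : V → V → Prop}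

lemma thinStep_subset {jt : Jointree E J} {S S' : J → J → Set V}
    (h : ThinStep jt S S') (a b : J) : S' a b ⊆ S a b := by
  obtain ⟨i, j, X, _, _, _, _, hS'⟩ := h
  subst hS'
  by_cases hc : (a = i ∧ b = j) ∨ (a = j ∧ b = i) <;> simp [hc, Set.diff_subset]

lemma thinStep_root_mem {jt : Jointree E J} {S S' : J → J → Set V}
    (h : ThinStep jt S S') {a b : J} {X : V} (hX : isRoot E X) (hm : X ∈ S a b) :
    X ∈ S' a b := by
  obtain ⟨i, j, Y, _, hYr, _, _, hS'⟩ := h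
  subst hS'
  by_cases hc : (a = i ∧ b = j) ∨ (a = j ∧ b = i) <;> simp [hc, hm]
  rintro rfl; exact hYr hX

lemma thin_subset_of_reflTransGen {jt : Jointree E J} {S₀ S : J → J → Set V}
    (h : Relation.ReflTransGen (ThinStep jt) S₀ S) (a b : J) : S a b ⊆ S₀ a b := by
  induction h with
  | refl => exact subset_rfl
  | tail _ hstep ih => exact (thinStep_subset hstep a b).trans ih

lemma thin_root_mem_of_reflTransGen {jt : Jointree E J} {S₀ S : J → J → Set V}
    (h : Relation.ReflTransGen (ThinStep jt) S₀ S) {a b : J} {X : V}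
    (hX : isRoot E X) (hm : X ∈ S₀ a b) : X ∈ S a b := by
  induction h with
  | refl => exact hm
  | tail _ hstep ih => exact thinStep_root_mem hstep hX ih

/-- From any separator assignment one can reach a terminal one. -/
lemma exists_terminal [Finite J] [Finite V] (jt : Jointree E J) (S : J → J → Set V) :
    ∃ S', Relation.ReflTransGen (ThinStep jt) S S' ∧ ∀ S'', ¬ ThinStep jt S' S'' := by
  classical
  cases nonempty_fintype J
  cases nonempty_fintype V
  set μ : (J → J → Set V) → ℕ := fun S => ∑ p : J × J, (S p.1 p.2).ncard with hμ
  suffices h : ∀ (n : ℕ) (S : J → J → Set V), μ S ≤ n →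
      ∃ S', Relation.ReflTransGen (ThinStep jt) S S' ∧ ∀ S'', ¬ ThinStep jt S' S'' by
    exact h (μ S) S le_rfl
  intro n
  induction n with
  | zero =>
    intro S hS
    refine ⟨S, Relation.ReflTransGen.refl, fun S'' hstep => ?_⟩
    obtain ⟨i, j, X, hadj, hXr, hmem, _, _⟩ := hstep
    have h1 : 0 < (S i j).ncard :=
      (Set.ncard_pos (Set.toFinite _)).mpr ⟨X, hmem⟩
    have h2 : (S i j).ncard ≤ μ S := by
      exact Finset.single_le_sum (f := fun p : J × J => (S p.1 p.2).ncard)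
        (fun _ _ => Nat.zero_le _) (Finset.mem_univ (i, j))
    omega
  | succ n ih =>
    intro S hS
    by_cases hterm : ∀ S'', ¬ ThinStep jt S S''
    · exact ⟨S, Relation.ReflTransGen.refl, hterm⟩
    · push_neg at hterm
      obtain ⟨S', hstep⟩ := hterm
      have hlt : μ S' < μ S := by
        obtain ⟨i, j, X, hadj, hXr, hmem, _, hS'⟩ := hstep
        have hij : ∀ p : J × J, (S' p.1 p.2).ncard ≤ (S p.1 p.2).ncard := by
          intro p
          subst hS'
          by_cases hc : (p.1 = i ∧ p.2 = j) ∨ (p.1 = j ∧ p.2 = i) <;>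
            simp only [hc, if_pos, if_neg, ite_true, ite_false, not_false_iff] <;>
          · exact Set.ncard_le_ncard (by simp [Set.diff_subset]) (Set.toFinite _)
        have hstrict : (S' i j).ncard < (S i j).ncard := by
          have : S' i j = S i j \ {X} := by subst hS'; simp
          rw [this]
          refine Set.ncard_lt_ncard ?_ (Set.toFinite _)
          constructor
          · exact Set.diff_subset
          · intro hsub
            have := hsub hmem
            simp at this
        exact Finset.sum_lt_sum (fun p _ => hij p) ⟨(i, j), Finset.mem_univ _, hstrict⟩
      have : μ S' ≤ n := by omega
      obtain ⟨S'', hreach, hterm'⟩ := ih S' this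
      exact ⟨S'', Relation.ReflTransGen.head hstep hreach, hterm'⟩

end AuxThinning
noncomputable section AuxForest

universe u' v'

variable {V : Type u'} {J : Type v'} {E : V → V → Prop}

open SimpleGraph

/-- In a finite acyclic graph with at least one edge, some vertex has a unique neighbor. -/
lemma exists_unique_neighbor [Finite J] (G : SimpleGraph J) (hG : G.IsAcyclic)
    {a b : J} (hab : G.Adj a b) :
    ∃ i j, G.Adj i j ∧ ∀ k, G.Adj i k → k = j := by
  classical
  cases nonempty_fintype J
  set lens : Set ℕ := {n | ∃ (u : J) (v : J) (p : G.Walk u v), p.IsPath ∧ p.length = n}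
    with hlens
  have h1 : (1 : ℕ) ∈ lens := by
    refine ⟨a, b, Walk.cons hab Walk.nil, ?_, rfl⟩
    simp [hab.ne]
  have hbdd : BddAbove lens := by
    refine ⟨Fintype.card J, fun n hn => ?_⟩
    obtain ⟨u, v, p, hp, rfl⟩ := hn
    exact le_of_lt hp.length_lt
  have hmem := Nat.sSup_mem ⟨1, h1⟩ hbdd
  set n := sSup lens with hn
  have hn1 : 1 ≤ n := le_csSup hbdd h1
  obtain ⟨u, v, p, hp, hplen⟩ := hmem
  cases p with
  | nil => simp at hplen; omega
  | @cons _ w _ h p' =>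
    refine ⟨u, w, h, fun k hk => ?_⟩
    by_contra hkw
    have hku : k ≠ u := fun e => by subst e; exact G.irrefl hk
    rw [Walk.cons_isPath_iff] at hp
    by_cases hks : k ∈ p'.support
    · -- build a cycle
      have hq' : (p'.takeUntil k hks).IsPath := hp.1.takeUntil hks
      have hq : (Walk.cons h (p'.takeUntil k hks)).IsPath := by
        rw [Walk.cons_isPath_iff]
        exact ⟨hq', fun hu => hp.2 (Walk.support_takeUntil_subset _ hks hu)⟩
      have hcyc : (Walk.cons hk.symm (Walk.cons h (p'.takeUntil k hks))).IsCycle := by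
        rw [Walk.cons_isCycle_iff]
        refine ⟨hq, ?_⟩
        intro hedge
        rw [Walk.edges_cons] at hedge
        rcases List.mem_cons.mp hedge with hedge | hedge
        · rw [Sym2.eq_iff] at hedge
          rcases hedge with ⟨hk1, _⟩ | ⟨hk1, _⟩
          · exact hku hk1
          · exact hkw hk1
        · have : u ∈ (p'.takeUntil k hks).support := by
            have := Walk.fst_mem_support_of_mem_edges _ (by rwa [Sym2.eq_swap] at hedge)
            exact this
          exact hp.2 (Walk.support_takeUntil_subset _ hks this)
      exact hG _ hcyc
    · -- extend the maximal path
      have hks' : k ∉ (Walk.cons h p').support := by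
        rw [Walk.support_cons]
        intro hmem'
        rcases List.mem_cons.mp hmem' with e | e
        · exact hku e
        · exact hks e
      have hext : (Walk.cons hk.symm (Walk.cons h p')).IsPath := by
        rw [Walk.cons_isPath_iff]
        exact ⟨by rw [Walk.cons_isPath_iff]; exact hp, hks'⟩
      have : (Walk.cons hk.symm (Walk.cons h p')).length ∈ lens := ⟨_, _, _, hext, rfl⟩
      have hle := le_csSup hbdd this
      simp only [Walk.length_cons] at hle hplen
      omega

/-- If some adjacent separator contains an internal variable, a thinning step applies. -/
lemma exists_thinStep [Finite J] (jt : Jointree E J) (S : J → J → Set V)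
    {i0 j0 : J} {X : V} (hadj0 : jt.T.Adj i0 j0) (hXr : ¬ isRoot E X)
    (hmem0 : X ∈ S i0 j0) :
    ∃ S', ThinStep jt S S' := by
  classical
  set G : SimpleGraph J :=
    { Adj := fun a b => jt.T.Adj a b ∧ (X ∈ S a b ∨ X ∈ S b a)
      symm := by
        constructor
        rintro x y ⟨h1, h2⟩
        exact ⟨h1.symm, h2.symm⟩
      loopless := ⟨fun x h => jt.T.irrefl h.1⟩ } with hG
  have hGle : G ≤ jt.T := fun x y h => h.1
  have hGacyc : G.IsAcyclic := by
    intro v c hc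
    exact jt.isTree.IsAcyclic (c.mapLe hGle) (hc.mapLe hGle)
  obtain ⟨i, j, hij, huniq⟩ :=
    exists_unique_neighbor G hGacyc (a := i0) (b := j0) ⟨hadj0, Or.inl hmem0⟩
  have hrule : ∀ k, jt.T.Adj i k → k ≠ j → X ∉ S i k ∧ X ∉ S k i := by
    intro k hk hkj
    constructor
    · intro hXk
      exact hkj (huniq k ⟨hk, Or.inl hXk⟩)
    · intro hXk
      exact hkj (huniq k ⟨hk, Or.inr hXk⟩)
  rcases hij.2 with hXm | hXm
  · refine ⟨_, i, j, X, hij.1, hXr, hXm, Or.inr (Or.inl ?_), rfl⟩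
    exact fun k hk hkj => (hrule k hk hkj).1
  · refine ⟨_, j, i, X, hij.1.symm, hXr, hXm, Or.inr (Or.inr ?_), rfl⟩
    exact fun k hk hkj => (hrule k hk hkj).1

end AuxForest
noncomputable section AuxStar

universe u'

variable {V : Type u'}

open SimpleGraph

/-- The star graph on `Option V` with hub `none`. -/
def starG (V : Type u') : SimpleGraph (Option V) where
  Adj a b := a ≠ b ∧ (a = none ∨ b = none)
  symm := ⟨by rintro a b ⟨h1, h2⟩; exact ⟨h1.symm, h2.symm⟩⟩
  loopless := ⟨fun a h => h.1 rfl⟩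

lemma starG_preconnected : (starG V).Preconnected := by
  intro a b
  by_cases hab : a = b
  · subst hab; exact Reachable.refl a
  have hr : ∀ c : Option V, (starG V).Reachable c none := by
    intro c
    by_cases hc : c = none
    · subst hc; exact Reachable.refl _
    · exact ⟨Walk.cons ⟨hc, Or.inr rfl⟩ Walk.nil⟩
  by_cases ha : a = none
  · subst ha
    exact (hr b).symm
  by_cases hb : b = none
  · subst hb; exact hr a
  · exact (hr a).trans (hr b).symm

lemma starG_isAcyclic : (starG V).IsAcyclic := by
  intro v c hc
  have h3 := hc.three_le_length
  match c, hc, h3 with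
  | Walk.nil, hc, h3 => simp at h3
  | Walk.cons h1 Walk.nil, hc, h3 => simp at h3
  | @Walk.cons _ _ _ x _ h1 (@Walk.cons _ _ _ y _ h2 rest), hc, h3 =>
    have tailnodup := hc.2
    by_cases hv : v = none
    · subst hv
      have hx : x ≠ none := fun e => h1.1 e.symm
      have hy : y = none := (h2.2).resolve_left hx
      subst hy
      cases rest with
      | nil => simp [Walk.length_cons] at h3
      | @cons _ z _ h3' rest' =>
        have : (none : Option V) ∈ rest'.support := by
          have := rest'.end_mem_support
          simpa using this
        simp only [Walk.support_cons, List.tail_cons, List.nodup_cons] at tailnodup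
        exact tailnodup.2.1 (by simp [this])
    · have hx : x = none := h1.2.resolve_left hv
      subst hx
      have hy : y ≠ none := fun e => h2.1 e.symm
      cases rest with
      | nil =>
        simp [Walk.length_cons] at h3
      | @cons _ w _ h3' rest' =>
        have hw : w = none := h3'.2.resolve_left hy
        subst hw
        have : (none : Option V) ∈ rest'.support.cons y := by
          simp [rest'.start_mem_support]
        simp only [Walk.support_cons, List.tail_cons, List.nodup_cons] at tailnodup
        exact tailnodup.1 (by simpa using rest'.start_mem_support)

lemma starG_isTree [Nonempty V] : (starG V).IsTree :=
  ⟨⟨starG_preconnected⟩, starG_isAcyclic⟩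

lemma starG_isTree' : (starG V).IsTree :=
  ⟨⟨starG_preconnected⟩, starG_isAcyclic⟩

lemma starG_leaf_some [Nontrivial V] (x : V) : IsLeaf (starG V) (some x) := by
  refine ⟨none, ⟨by simp [starG], Or.inr rfl⟩, fun k hk => ?_⟩
  rcases hk.2 with h | h
  · exact absurd h (by simp)
  · exact h

lemma starG_not_leaf_none [Nontrivial V] : ¬ IsLeaf (starG V) (none : Option V) := by
  rintro ⟨k, hk, huniq⟩
  obtain ⟨a, b, hab⟩ := exists_pair_ne V
  have ha := huniq (some a) ⟨by simp, Or.inl rfl⟩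
  have hb := huniq (some b) ⟨by simp, Or.inl rfl⟩
  have := ha.trans hb.symm
  exact hab (by injection this)

/-- Some jointree exists for any DAG on a finite vertex set. -/
lemma exists_jointree [Finite V] (E : V → V → Prop) :
    ∃ (J : Type u') (_ : Finite J) (jt : Jointree E J), Nonempty (Finite J) := by
  cases nonempty_fintype V
  haveI : Finite (Option V) := Finite.of_fintype _
  rcases isEmpty_or_nonempty V with hV | hV
  · -- single node jointree
    refine ⟨Option V, inferInstance, ?_, ⟨inferInstance⟩⟩
    exact
      { T := starG V
        isTree := starG_isTree'
        H := fun X => (IsEmpty.false X).elim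
        hosts_nonempty := fun X => (IsEmpty.false X).elim
        hosts_leaf := fun X => (IsEmpty.false X).elim
        leaf_host := by
          rintro j ⟨k, hk, -⟩
          exact absurd hk (by
            rcases j with _ | jv
            · rcases k with _ | kv
              · simp [starG]
              · exact (IsEmpty.false kv).elim
            · exact (IsEmpty.false jv).elim) }
  · rcases subsingleton_or_nontrivial V with hsub | hnt
    · -- unique element: both nodes of the 2-node star are leaves hosting the family
      refine ⟨Option V, inferInstance, ?_, ⟨inferInstance⟩⟩
      have hleaf : ∀ j : Option V, IsLeaf (starG V) j := by
        intro j
        rcases j with _ | jv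
        · refine ⟨some hV.some, ⟨by simp, Or.inl rfl⟩, fun k hk => ?_⟩
          rcases k with _ | kv
          · exact absurd rfl hk.1
          · exact congrArg some (Subsingleton.elim kv hV.some)
        · refine ⟨none, ⟨by simp, Or.inr rfl⟩, fun k hk => ?_⟩
          rcases hk.2 with h | h
          · exact absurd h (by simp)
          · exact h
      exact
        { T := starG V
          isTree := starG_isTree'
          H := fun _ => Set.univ
          hosts_nonempty := fun X => ⟨none, trivial⟩
          hosts_leaf := fun X j _ => hleaf j
          leaf_host := fun j _ => ⟨hV.some, trivial, fun y _ => Subsingleton.elim y hV.some⟩ }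
    · refine ⟨Option V, inferInstance, ?_, ⟨inferInstance⟩⟩
      exact
        { T := starG V
          isTree := starG_isTree'
          H := fun X => {some X}
          hosts_nonempty := fun X => ⟨some X, rfl⟩
          hosts_leaf := by
            rintro X j hj
            rw [Set.mem_singleton_iff] at hj
            subst hj
            exact starG_leaf_some X
          leaf_host := by
            intro j hj
            rcases j with _ | jv
            · exact absurd hj starG_not_leaf_none
            · exact ⟨jv, rfl, fun y hy => by injection hy.symm⟩ }

lemma causal_set_nonempty [Finite V] (E : V → V → Prop) :
    {w : ℕ | ∃ (J : Type u') (_ : Finite J) (jt : Jointree E J) (S : J → J → Set V),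
      IsThinning jt S ∧ thWidthJT jt S = w}.Nonempty := by
  obtain ⟨J, hJ, jt, -⟩ := exists_jointree E
  obtain ⟨S, hreach, hterm⟩ := exists_terminal (J := J) jt (fun i j => sepOf jt i j)
  exact ⟨thWidthJT jt S, J, hJ, jt, S, ⟨hreach, hterm⟩, rfl⟩

end AuxStar
noncomputable section Main

open SimpleGraph

universe u'

variable {V : Type u'} {E : V → V → Prop} (R : Set V) (N : ℕ)
variable {JB : Type u'} (jtB : Jointree E JB)

/-- Base-jointree leaves hosting a family of a duplicated (non-`R`) variable. -/
def LSet : Set JB := {l | ∃ x : V, x ∉ R ∧ l ∈ jtB.H x}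

/-- Nodes of the `N`-world jointree: base nodes plus `N` pendant copies of each
leaf hosting a duplicated family. -/
abbrev JN := JB ⊕ (↥(LSet R jtB) × Fin N)

/-- Tree of the `N`-world jointree: the base tree with, for each leaf hosting a
duplicated family, `N` pendant leaves attached to it. -/
def TN : SimpleGraph (JN R N jtB) where
  Adj a b :=
    match a, b with
    | Sum.inl a, Sum.inl b => jtB.T.Adj a b
    | Sum.inl a, Sum.inr p => p.1.1 = a
    | Sum.inr p, Sum.inl b => p.1.1 = b
    | Sum.inr _, Sum.inr _ => False
  symm := by
    constructor
    rintro (a | p) (b | q) h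
    · exact jtB.T.adj_symm h
    · exact h
    · exact h
    · exact h.elim
  loopless := by
    constructor
    rintro (a | p) h
    · exact jtB.T.irrefl h
    · exact h.elim

lemma TN_adj_inl_inl {a b : JB} : (TN R N jtB).Adj (Sum.inl a) (Sum.inl b) ↔ jtB.T.Adj a b :=
  Iff.rfl

lemma TN_adj_inl_inr {a : JB} {p : ↥(LSet R jtB) × Fin N} :
    (TN R N jtB).Adj (Sum.inl a) (Sum.inr p) ↔ p.1.1 = a := Iff.rfl

lemma TN_adj_inr_inl {b : JB} {p : ↥(LSet R jtB) × Fin N} :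
    (TN R N jtB).Adj (Sum.inr p) (Sum.inl b) ↔ p.1.1 = b := Iff.rfl

lemma TN_adj_inr_inr {p q : ↥(LSet R jtB) × Fin N} :
    ¬ (TN R N jtB).Adj (Sum.inr p) (Sum.inr q) := fun h => h

/-- The embedding of the base tree into the `N`-world tree. -/
def homInl : jtB.T →g TN R N jtB where
  toFun := Sum.inl
  map_rel' := fun h => h

lemma homInl_injective : Function.Injective (homInl (E := E) R N jtB) :=
  fun _ _ h => Sum.inl.inj h

lemma TN_preconnected : (TN R N jtB).Preconnected := by
  have hbase : ∀ a b : JB, (TN R N jtB).Reachable (Sum.inl a) (Sum.inl b) := by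
    intro a b
    obtain ⟨w⟩ := jtB.isTree.isConnected.preconnected a b
    exact ⟨w.map (homInl R N jtB)⟩
  have hpend : ∀ p : ↥(LSet R jtB) × Fin N,
      (TN R N jtB).Reachable (Sum.inr p) (Sum.inl p.1.1) :=
    fun p => ⟨Walk.cons ((TN_adj_inr_inl R N jtB).mpr rfl) Walk.nil⟩
  rintro (a | p) (b | q)
  · exact hbase a b
  · exact (hbase a q.1.1).trans (hpend q).symm
  · exact (hpend p).trans (hbase p.1.1 b)
  · exact ((hpend p).trans (hbase p.1.1 q.1.1)).trans (hpend q).symm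

/-- A walk whose support consists of base nodes pulls back to the base tree. -/
lemma TN_pull {s t : JN R N jtB} (w : (TN R N jtB).Walk s t)
    (hsupp : ∀ z ∈ w.support, ∃ c : JB, z = Sum.inl c) :
    ∀ {a b : JB} (ha : s = Sum.inl a) (hb : t = Sum.inl b),
      ∃ w₀ : jtB.T.Walk a b, w₀.map (homInl R N jtB) = w.copy ha hb := by
  induction w with
  | nil =>
    intro a b ha hb
    have : a = b := by rw [ha] at hb; exact Sum.inl.inj hb
    subst this
    subst ha
    exact ⟨Walk.nil, by simp; rfl⟩
  | @cons s y t h w' ih =>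
    intro a b ha hb
    subst ha
    obtain ⟨cy, rfl⟩ := hsupp y (by simp [Walk.support_cons])
    have hsupp' : ∀ z ∈ w'.support, ∃ c : JB, z = Sum.inl c := by
      intro z hz
      exact hsupp z (by simp [Walk.support_cons, hz])
    obtain ⟨w₀, hw₀⟩ := ih hsupp' rfl hb
    refine ⟨Walk.cons ((TN_adj_inl_inl R N jtB).mp h) w₀, ?_⟩
    rw [Walk.map_cons, Walk.copy_cons]
    exact congrArg (Walk.cons _) hw₀

/-- The last edge of a non-trivial walk enters the endpoint from one of its neighbors. -/
lemma walk_last_edge {J' : Type*} {G : SimpleGraph J'} :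
    ∀ {s t : J'} (w : G.Walk s t), s ≠ t → ∃ z : J', G.Adj z t ∧ s(z, t) ∈ w.edges := by
  intro s t w
  induction w with
  | nil => intro h; exact absurd rfl h
  | @cons s y t h w' ih =>
    intro _
    by_cases hyt : y = t
    · subst hyt
      exact ⟨s, h, by simp⟩
    · obtain ⟨z, hz, hze⟩ := ih hyt
      exact ⟨z, hz, by simp [hze]⟩

lemma TN_isAcyclic : (TN R N jtB).IsAcyclic := by
  intro v c hc
  obtain hpend | hpend :=
    Classical.em (∃ p : ↥(LSet R jtB) × Fin N, Sum.inr p ∈ c.support)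
  · obtain ⟨p, hp⟩ := hpend
    have hc' := hc.rotate hp
    set c' := c.rotate _ hp with hc'def
    clear_value c'
    cases c' with
    | nil => exact hc'.ne_nil rfl
    | @cons _ y _ h1 rest =>
      have hy : y = Sum.inl p.1.1 := by
        rcases y with a | q
        · exact congrArg Sum.inl ((TN_adj_inr_inl R N jtB).mp h1).symm
        · exact (TN_adj_inr_inr R N jtB h1).elim
      subst hy
      rw [Walk.cons_isCycle_iff] at hc'
      have hne : (Sum.inl p.1.1 : JN R N jtB) ≠ Sum.inr p := by simp
      obtain ⟨z, hz, hze⟩ := walk_last_edge rest hne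
      have hzeq : z = Sum.inl p.1.1 := by
        rcases z with a | q
        · exact congrArg Sum.inl ((TN_adj_inl_inr R N jtB).mp hz.symm).symm ▸ rfl
        · exact (TN_adj_inr_inr R N jtB hz.symm).elim
      subst hzeq
      exact hc'.2 (by rwa [Sym2.eq_swap] at hze)
  · push_neg at hpend
    have hsupp : ∀ z ∈ c.support, ∃ cb : JB, z = Sum.inl cb := by
      intro z hz
      rcases z with a | q
      · exact ⟨a, rfl⟩
      · exact absurd hz (hpend q)
    obtain ⟨a, ha⟩ := hsupp v c.start_mem_support
    obtain ⟨c₀, hc₀⟩ := TN_pull R N jtB c hsupp ha ha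
    have : c₀.IsCycle := by
      have hcopy : (c.copy ha ha).IsCycle := by rwa [Walk.isCycle_copy]
      rw [← hc₀] at hcopy
      exact ((Walk.map_isCycle_iff_of_injective (homInl_injective R N jtB)).mp hcopy)
    exact jtB.isTree.IsAcyclic c₀ this

lemma TN_isTree : (TN R N jtB).IsTree := by
  refine ⟨?_, TN_isAcyclic R N jtB⟩
  rw [connected_iff]
  refine ⟨TN_preconnected R N jtB, ?_⟩
  rcases jtB.isTree.isConnected.nonempty with ⟨a⟩
  exact ⟨Sum.inl a⟩

end Main
noncomputable section Main2

open SimpleGraph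

universe u'

variable {V : Type u'} {E : V → V → Prop} (R : Set V) (N : ℕ)
variable {JB : Type u'} (jtB : Jointree E JB)

lemma base_host_unique {X X' : V} {l : JB} (h1 : l ∈ jtB.H X) (h2 : l ∈ jtB.H X') :
    X = X' := by
  obtain ⟨Y, hY, hun⟩ := jtB.leaf_host l (jtB.hosts_leaf X l h1)
  rw [hun X h1, hun X' h2]

lemma TN_isLeaf_inl {l : JB} (hleaf : IsLeaf jtB.T l) (hnot : l ∉ LSet R jtB) :
    IsLeaf (TN R N jtB) (Sum.inl l) := by
  obtain ⟨u, hu, huniq⟩ := hleaf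
  refine ⟨Sum.inl u, (TN_adj_inl_inl R N jtB).mpr hu, ?_⟩
  rintro (b | q) hadj
  · exact congrArg Sum.inl (huniq b ((TN_adj_inl_inl R N jtB).mp hadj))
  · exact absurd (((TN_adj_inl_inr R N jtB).mp hadj) ▸ q.1.2) hnot

lemma TN_isLeaf_inr (p : ↥(LSet R jtB) × Fin N) :
    IsLeaf (TN R N jtB) (Sum.inr p) := by
  refine ⟨Sum.inl p.1.1, (TN_adj_inr_inl R N jtB).mpr rfl, ?_⟩
  rintro (b | q) hadj
  · exact congrArg Sum.inl ((TN_adj_inr_inl R N jtB).mp hadj).symm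
  · exact (TN_adj_inr_inr R N jtB hadj).elim

lemma TN_leaf_inl_inv (hN : 1 ≤ N) {a : JB} (h : IsLeaf (TN R N jtB) (Sum.inl a)) :
    IsLeaf jtB.T a ∧ a ∉ LSet R jtB := by
  obtain ⟨w, hw, huniq⟩ := h
  have hnot : a ∉ LSet R jtB := by
    intro ha
    obtain ⟨x, hxR, hx⟩ := ha
    obtain ⟨u, hu, _⟩ := jtB.hosts_leaf x a hx
    have h1 : (TN R N jtB).Adj (Sum.inl a) (Sum.inl u) := (TN_adj_inl_inl R N jtB).mpr hu
    have h2 : (TN R N jtB).Adj (Sum.inl a) (Sum.inr ⟨⟨a, ⟨x, hxR, hx⟩⟩, ⟨0, hN⟩⟩) :=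
      (TN_adj_inl_inr R N jtB).mpr rfl
    have e1 := huniq _ h1
    have e2 := huniq _ h2
    rw [← e2] at e1
    exact absurd e1 (by simp)
  refine ⟨?_, hnot⟩
  rcases w with u | q
  · exact ⟨u, (TN_adj_inl_inl R N jtB).mp hw,
      fun b hb => Sum.inl.inj (huniq (Sum.inl b) ((TN_adj_inl_inl R N jtB).mpr hb))⟩
  · exact absurd (((TN_adj_inl_inr R N jtB).mp hw) ▸ q.1.2) hnot

/-- The host function of the `N`-world jointree. -/
def HN : NVar R N → Set (JN R N jtB)
  | Sum.inl r => Sum.inl '' jtB.H r.1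
  | Sum.inr xk => {j | ∃ (l : JB) (hl : l ∈ LSet R jtB),
      l ∈ jtB.H xk.1.1 ∧ j = Sum.inr ⟨⟨l, hl⟩, xk.2⟩}

/-- The `N`-world jointree. -/
def jtN (hN : 1 ≤ N) : Jointree (nEdge E R N) (JN R N jtB) where
  T := TN R N jtB
  isTree := TN_isTree R N jtB
  H := HN R N jtB
  hosts_nonempty := by
    rintro (r | ⟨x, k⟩)
    · obtain ⟨l, hl⟩ := jtB.hosts_nonempty r.1
      exact ⟨Sum.inl l, ⟨l, hl, rfl⟩⟩
    · obtain ⟨l, hl⟩ := jtB.hosts_nonempty x.1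
      exact ⟨Sum.inr ⟨⟨l, ⟨x.1, x.2, hl⟩⟩, k⟩, ⟨l, ⟨x.1, x.2, hl⟩, hl, rfl⟩⟩
  hosts_leaf := by
    rintro (r | ⟨x, k⟩) j hj
    · obtain ⟨l, hl, rfl⟩ := hj
      refine TN_isLeaf_inl R N jtB (jtB.hosts_leaf _ l hl) ?_
      rintro ⟨x, hxR, hx⟩
      exact hxR ((base_host_unique jtB hx hl) ▸ r.2)
    · obtain ⟨l, hl, hmem, rfl⟩ := hj
      exact TN_isLeaf_inr R N jtB _
  leaf_host := by
    rintro (a | p) hleaf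
    · obtain ⟨hbl, hnot⟩ := TN_leaf_inl_inv R N jtB hN hleaf
      obtain ⟨X, hX, hXuniq⟩ := jtB.leaf_host a hbl
      have hXR : X ∈ R := by
        by_contra hc
        exact hnot ⟨X, hc, hX⟩
      refine ⟨Sum.inl ⟨X, hXR⟩, ⟨a, hX, rfl⟩, ?_⟩
      rintro (r | ⟨x, k⟩) hY
      · obtain ⟨l, hl, hlj⟩ := hY
        have hla : l = a := Sum.inl.inj hlj
        subst hla
        have := hXuniq r.1 hl
        exact congrArg Sum.inl (Subtype.ext this)
      · obtain ⟨l, hl', hmem, hlj⟩ := hY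
        exact absurd hlj (by simp)
    · obtain ⟨x0, hx0R, hx0⟩ := p.1.2
      refine ⟨Sum.inr ⟨⟨x0, hx0R⟩, p.2⟩, ⟨p.1.1, p.1.2, hx0, by simp⟩, ?_⟩
      rintro (r | ⟨x, k⟩) hY
      · obtain ⟨l, hl, hlj⟩ := hY
        exact absurd hlj (by simp)
      · obtain ⟨l, hl', hmem, hlj⟩ := hY
        have hpl : p = ⟨⟨l, hl'⟩, k⟩ := Sum.inr.inj hlj
        subst hpl
        have hx : x.1 = x0 := base_host_unique jtB hmem hx0
        rw [show x = (⟨x0, hx0R⟩ : {x : V // x ∉ R}) from Subtype.ext hx]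

end Main2
noncomputable section Main3

open SimpleGraph

universe u'

variable {V : Type u'} {E : V → V → Prop} (R : Set V) (N : ℕ)
variable {JB : Type u'} (jtB : Jointree E JB)

/-- Project an `N`-world jointree node to the base jointree node. -/
def fProj : JN R N jtB → JB := Sum.elim id (fun p => p.1.1)

/-- Project the base variable of an `N`-world variable. -/
def baseVar : NVar R N → V := Sum.elim (fun r => r.1) (fun xk => xk.1.1)

lemma famN_baseVar {Y ρ : NVar R N} (h : ρ ∈ famOf (nEdge E R N) Y) :
    baseVar R N ρ ∈ famOf E (baseVar R N Y) := by
  rcases h with h | h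
  · subst h; exact Or.inl rfl
  · rcases Y with r | ⟨x, k⟩
    · rcases ρ with p | pk <;> exact (h : False).elim
    · rcases ρ with p | ⟨p, k'⟩
      · exact Or.inr (h : E p.1 x.1)
      · exact Or.inr (h : E p.1 x.1 ∧ k' = k).1

lemma isRoot_nEdge_baseVar (hR : ∀ x ∈ R, isRoot E x) {ρ : NVar R N}
    (h : isRoot (nEdge E R N) ρ) : isRoot E (baseVar R N ρ) := by
  rcases ρ with r | ⟨y, k⟩
  · exact hR r.1 r.2
  · intro p hp
    by_cases hpR : p ∈ R
    · exact h (Sum.inl ⟨p, hpR⟩) (hp : E p y.1)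
    · exact h (Sum.inr (⟨p, hpR⟩, k)) ⟨hp, rfl⟩

/-- Walks in the `N`-world tree minus a base edge project to base reachability. -/
lemma TN_project {a b : JB} :
    ∀ {s t : JN R N jtB}
      (_ : ((TN R N jtB).deleteEdges {s(Sum.inl a, Sum.inl b)}).Walk s t),
      (jtB.T.deleteEdges {s(a, b)}).Reachable (fProj R N jtB s) (fProj R N jtB t) := by
  intro s t w
  induction w with
  | nil => exact Reachable.refl _
  | @cons x y z h w' ih =>
    refine Reachable.trans ?_ ih
    rw [deleteEdges_adj] at h
    obtain ⟨hadj, hne⟩ := h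
    rcases x with xa | xp <;> rcases y with ya | yp
    · refine Adj.reachable ?_
      rw [deleteEdges_adj]
      refine ⟨(TN_adj_inl_inl R N jtB).mp hadj, ?_⟩
      intro hmem
      apply hne
      simp only [Set.mem_singleton_iff] at hmem ⊢
      exact congrArg (Sym2.map Sum.inl) hmem
    · have : yp.1.1 = xa := (TN_adj_inl_inr R N jtB).mp hadj
      show (jtB.T.deleteEdges _).Reachable xa yp.1.1
      rw [this]
    · have : xp.1.1 = ya := (TN_adj_inr_inl R N jtB).mp hadj
      show (jtB.T.deleteEdges _).Reachable xp.1.1 ya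
      rw [this]
    · exact (TN_adj_inr_inr R N jtB hadj).elim

/-- After deleting its unique edge, a pendant node reaches only itself. -/
lemma reach_pendant_side {p : ↥(LSet R jtB) × Fin N} {es : Set (Sym2 (JN R N jtB))}
    (hes : s(Sum.inr p, Sum.inl p.1.1) ∈ es) {z : JN R N jtB}
    (w : ((TN R N jtB).deleteEdges es).Walk (Sum.inr p) z) : z = Sum.inr p := by
  cases w with
  | nil => rfl
  | @cons _ y _ h w' =>
    exfalso
    rw [deleteEdges_adj] at h
    obtain ⟨hadj, hne⟩ := h
    rcases y with ya | yq
    · have hy : p.1.1 = ya := (TN_adj_inr_inl R N jtB).mp hadj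
      subst hy
      exact hne hes
    · exact TN_adj_inr_inr R N jtB hadj

/-- After deleting its base edge, a base leaf reaches only itself and its pendants. -/
lemma reach_lside {l u : JB} (hleafB : IsLeaf jtB.T l) (hu : jtB.T.Adj l u) :
    ∀ {s z : JN R N jtB}
      (_ : ((TN R N jtB).deleteEdges {s(Sum.inl l, Sum.inl u)}).Walk s z)
      (_ : s = Sum.inl l ∨ ∃ q : ↥(LSet R jtB) × Fin N, q.1.1 = l ∧ s = Sum.inr q),
      z = Sum.inl l ∨ ∃ q : ↥(LSet R jtB) × Fin N, q.1.1 = l ∧ z = Sum.inr q := by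
  intro s z w
  induction w with
  | nil => exact fun h => h
  | @cons x y z h w' ih =>
    intro hx
    refine ih ?_
    rw [deleteEdges_adj] at h
    obtain ⟨hadj, hne⟩ := h
    obtain ⟨u0, hu0, huniq⟩ := hleafB
    rcases hx with rfl | ⟨q, hq, rfl⟩
    · rcases y with ya | yq
      · exfalso
        have hadj' := (TN_adj_inl_inl R N jtB).mp hadj
        -- l is a base leaf, so ya is its unique neighbour; but then the edge is deleted
        have h1 : ya = u0 := huniq ya hadj'
        have h2 : u = u0 := huniq u hu
        apply hne
        simp only [Set.mem_singleton_iff]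
        rw [h1, h2]
      · exact Or.inr ⟨yq, (TN_adj_inl_inr R N jtB).mp hadj, rfl⟩
    · rcases y with ya | yq
      · have : q.1.1 = ya := (TN_adj_inr_inl R N jtB).mp hadj
        exact Or.inl (by rw [← this, hq])
      · exact (TN_adj_inr_inr R N jtB hadj).elim

end Main3
noncomputable section Main4

open SimpleGraph

universe u'

variable {V : Type u'} {E : V → V → Prop} (R : Set V) (N : ℕ)
variable {JB : Type u'} (jtB : Jointree E JB)

lemma sideVars_proj (hN : 1 ≤ N) {a b : JB} {ρ : NVar R N}
    (h : ρ ∈ sideVars (jtN R N jtB hN) (Sum.inl a) (Sum.inl b)) :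
    baseVar R N ρ ∈ sideVars jtB a b := by
  obtain ⟨Y, ℓ, hH, hfam, hreach⟩ := h
  obtain ⟨wlk⟩ := hreach
  have hproj := TN_project R N jtB (a := a) (b := b) wlk
  rcases Y with r | ⟨x, k⟩
  · obtain ⟨l1, hl1, rfl⟩ := hH
    exact ⟨r.1, l1, hl1, famN_baseVar R N hfam, hproj⟩
  · obtain ⟨l1, hl1', hmem, rfl⟩ := hH
    exact ⟨x.1, l1, hmem, famN_baseVar R N hfam, hproj⟩

lemma side_bound_leaf (hN : 1 ≤ N) {a : JB} (hbl : IsLeaf jtB.T a) {xa : V}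
    (hxa : a ∈ jtB.H xa) {j' : JN R N jtB}
    (hadj : (TN R N jtB).Adj (Sum.inl a) j') {ρ : NVar R N}
    (hρ : ρ ∈ sepOf (jtN R N jtB hN) (Sum.inl a) j') :
    baseVar R N ρ ∈ famOf E xa := by
  rcases j' with b | q
  · -- use the `a` side of the edge
    obtain ⟨Y, ℓ, hH, hfam, hreach⟩ := hρ.1
    obtain ⟨wlk⟩ := hreach
    have hz := reach_lside R N jtB hbl ((TN_adj_inl_inl R N jtB).mp hadj) wlk (Or.inl rfl)
    rcases hz with rfl | ⟨q, hq, rfl⟩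
    · rcases Y with r | ⟨x, k⟩
      · obtain ⟨l1, hl1, hl1e⟩ := hH
        have hla : l1 = a := Sum.inl.inj hl1e
        subst hla
        have hrx : r.1 = xa := base_host_unique jtB hl1 hxa
        rw [← hrx]
        exact famN_baseVar R N hfam
      · obtain ⟨l1, _, _, hl1e⟩ := hH
        exact absurd hl1e (by simp)
    · rcases Y with r | ⟨x, k⟩
      · obtain ⟨l1, hl1, hl1e⟩ := hH
        exact absurd hl1e (by simp)
      · obtain ⟨l1, hl1', hmem, hl1e⟩ := hH
        have hq1 : q = ⟨⟨l1, hl1'⟩, k⟩ := Sum.inr.inj hl1e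
        have hla : l1 = a := by rw [hq1] at hq; exact hq
        subst hla
        have hxx : x.1 = xa := base_host_unique jtB hmem hxa
        rw [← hxx]
        exact famN_baseVar R N hfam
  · -- use the pendant side of the edge
    obtain ⟨Y, ℓ, hH, hfam, hreach⟩ := hρ.2
    obtain ⟨wlk⟩ := hreach
    have hqa : q.1.1 = a := (TN_adj_inl_inr R N jtB).mp hadj
    have hz : ℓ = Sum.inr q := by
      refine reach_pendant_side R N jtB ?_ wlk
      rw [hqa]
      rfl
    subst hz
    rcases Y with r | ⟨x, k⟩
    · obtain ⟨l1, hl1, hl1e⟩ := hH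
      exact absurd hl1e (by simp)
    · obtain ⟨l1, hl1', hmem, hl1e⟩ := hH
      have hq1 : q = ⟨⟨l1, hl1'⟩, k⟩ := Sum.inr.inj hl1e
      have hla : l1 = a := by rw [hq1] at hqa; exact hqa
      subst hla
      have hxx : x.1 = xa := base_host_unique jtB hmem hxa
      rw [← hxx]
      exact famN_baseVar R N hfam

lemma ncard_baseVar_le [Finite V] (hN : 1 ≤ N) {A : Set (NVar R N)} {C : Set V}
    (h : ∀ ρ ∈ A, baseVar R N ρ ∈ C) : A.ncard ≤ N * C.ncard := by
  classical
  set f : NVar R N → V × Fin N := fun ρ =>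
    (baseVar R N ρ, Sum.elim (fun _ => (⟨0, hN⟩ : Fin N)) (fun xk => xk.2) ρ) with hf
  have hinj : Function.Injective f := by
    rintro (r | ⟨x, k⟩) (r' | ⟨x', k'⟩) he
    · have h1 : r.1 = r'.1 := congrArg Prod.fst he
      exact congrArg Sum.inl (Subtype.ext h1)
    · have h1 : r.1 = x'.1 := congrArg Prod.fst he
      exact absurd (h1 ▸ r.2) x'.2
    · have h1 : x.1 = r'.1 := congrArg Prod.fst he
      exact absurd (h1.symm ▸ r'.2) x.2
    · have h1 : x.1 = x'.1 := congrArg Prod.fst he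
      have h2 : k = k' := congrArg Prod.snd he
      subst h2
      exact congrArg Sum.inr (congrArg (fun y => (y, k)) (Subtype.ext h1))
  have hsub : f '' A ⊆ C ×ˢ (Set.univ : Set (Fin N)) := by
    rintro - ⟨ρ, hρ, rfl⟩
    exact ⟨h ρ hρ, trivial⟩
  have hcard : (C ×ˢ (Set.univ : Set (Fin N))).ncard = C.ncard * N := by
    have e1 : ((C ×ˢ (Set.univ : Set (Fin N))) : Set (V × Fin N)) ≃ (C × (Set.univ : Set (Fin N))) :=
      Equiv.Set.prod _ _
    calc (C ×ˢ (Set.univ : Set (Fin N))).ncard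
        = Nat.card ((C ×ˢ (Set.univ : Set (Fin N))) : Set (V × Fin N)) := rfl
      _ = Nat.card (C × (Set.univ : Set (Fin N))) := Nat.card_congr e1
      _ = Nat.card C * Nat.card (Set.univ : Set (Fin N)) := Nat.card_prod _ _
      _ = C.ncard * N := by
          have h2 : Nat.card (Set.univ : Set (Fin N)) = N := by
            rw [Nat.card_congr (Equiv.Set.univ (Fin N)), Nat.card_eq_fintype_card,
              Fintype.card_fin]
          rw [h2]
          rfl
  have h1 : (f '' A).ncard ≤ (C ×ˢ (Set.univ : Set (Fin N))).ncard :=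
    Set.ncard_le_ncard hsub (Set.toFinite _)
  rw [Set.ncard_image_of_injective A hinj, hcard] at h1
  rw [Nat.mul_comm]
  exact h1

end Main4

/-- the causal treewidth of the `N`-world network is at most `N(w + 1) − 1`
where `w` is the causal treewidth of the base network. -/
theorem nworld_causal_treewidth_le {V : Type*} [Fintype V]
    (E : V → V → Prop) (hE : IsAcyclicRel E)
    (R : Set V) (hR : ∀ x ∈ R, isRoot E x) (N : ℕ) (hN : 1 ≤ N) :
    causalTreewidth (nEdge E R N) ≤ N * (causalTreewidth E + 1) - 1 := by
  classical
  obtain ⟨JB, hJBfin, jtB, SB, ⟨hreachB, htermB⟩, hWB⟩ :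
      causalTreewidth E ∈ {w : ℕ | ∃ (J : Type _) (_ : Finite J) (jt : Jointree E J)
        (S : J → J → Set V), IsThinning jt S ∧ thWidthJT jt S = w} :=
    Nat.sInf_mem (causal_set_nonempty E)
  haveI := hJBfin
  set w := causalTreewidth E with hwdef
  -- base cluster size bounds
  have hsupB : ∀ i : JB, (thClusterJT jtB SB i).ncard ≤ w + 1 := by
    intro i
    have h1 : (thClusterJT jtB SB i).ncard ≤ ⨆ i : JB, (thClusterJT jtB SB i).ncard :=
      le_ciSup (f := fun i : JB => (thClusterJT jtB SB i).ncard)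
        (Set.Finite.bddAbove (Set.finite_range _)) i
    have h2 := hWB
    unfold thWidthJT at h2
    omega
  have hfamB : ∀ x : V, (famOf E x).ncard ≤ w + 1 := by
    intro x
    obtain ⟨l, hl⟩ := jtB.hosts_nonempty x
    have hleaf := jtB.hosts_leaf x l hl
    have hsub : famOf E x ⊆ thClusterJT jtB SB l := by
      unfold thClusterJT
      rw [if_pos hleaf]
      exact Set.subset_biUnion_of_mem (u := fun Y => famOf E Y) hl
    exact le_trans (Set.ncard_le_ncard hsub (Set.toFinite _)) (hsupB l)
  have hSBsub : ∀ a b : JB, SB a b ⊆ sepOf jtB a b :=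
    thin_subset_of_reflTransGen hreachB
  have hSBroot : ∀ (a b : JB) (y : V), isRoot E y → y ∈ sepOf jtB a b → y ∈ SB a b :=
    fun a b y hy hm => thin_root_mem_of_reflTransGen hreachB hy hm
  -- the N-world jointree and a terminal thinning for it
  obtain ⟨S', hreach', hterm'⟩ :=
    exists_terminal (jtN R N jtB hN) (fun i j => sepOf (jtN R N jtB hN) i j)
  have hS'sub : ∀ a b, S' a b ⊆ sepOf (jtN R N jtB hN) a b :=
    thin_subset_of_reflTransGen hreach'
  have hnoint : ∀ i j : JN R N jtB, (jtN R N jtB hN).T.Adj i j →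
      ∀ ρ, ¬ isRoot (nEdge E R N) ρ → ρ ∉ S' i j := by
    intro i j hadj ρ hρ hmem
    obtain ⟨S'', hstep⟩ := exists_thinStep (jtN R N jtB hN) S' hadj hρ hmem
    exact hterm' S'' hstep
  -- cluster size bounds for the N-world jointree
  have hclu : ∀ i : JN R N jtB,
      (thClusterJT (jtN R N jtB hN) S' i).ncard ≤ N * (w + 1) := by
    intro i
    suffices hsuff : ∃ C : Set V, C.ncard ≤ w + 1 ∧
        ∀ ρ ∈ thClusterJT (jtN R N jtB hN) S' i, baseVar R N ρ ∈ C by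
      obtain ⟨C, hC1, hC2⟩ := hsuff
      exact le_trans (ncard_baseVar_le R N hN hC2) (Nat.mul_le_mul_left N hC1)
    by_cases hleaf : IsLeaf (jtN R N jtB hN).T i
    · obtain ⟨Y0, hY0, hY0uniq⟩ := (jtN R N jtB hN).leaf_host i hleaf
      refine ⟨famOf E (baseVar R N Y0), hfamB _, ?_⟩
      intro ρ hρ
      unfold thClusterJT at hρ
      rw [if_pos hleaf] at hρ
      simp only [Set.mem_iUnion] at hρ
      obtain ⟨Y, hY, hfam⟩ := hρ
      exact famN_baseVar R N (by rwa [hY0uniq Y hY] at hfam)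
    · rcases i with a | p
      swap
      · exact absurd (TN_isLeaf_inr R N jtB p) hleaf
      by_cases hbl : IsLeaf jtB.T a
      · obtain ⟨xa, hxa, -⟩ := jtB.leaf_host a hbl
        refine ⟨famOf E xa, hfamB xa, ?_⟩
        intro ρ hρ
        unfold thClusterJT at hρ
        rw [if_neg hleaf] at hρ
        simp only [Set.mem_iUnion] at hρ
        obtain ⟨j', hadj0, hmem⟩ := hρ
        exact side_bound_leaf R N jtB hN hbl hxa hadj0 (hS'sub _ _ hmem)
      · refine ⟨thClusterJT jtB SB a, hsupB a, ?_⟩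
        intro ρ hρ
        unfold thClusterJT at hρ
        rw [if_neg hleaf] at hρ
        simp only [Set.mem_iUnion] at hρ
        obtain ⟨j', hadj0, hmem⟩ := hρ
        have hadj : (jtN R N jtB hN).T.Adj (Sum.inl a) j' := hadj0
        rcases j' with b | q
        · have hadjB : jtB.T.Adj a b := (TN_adj_inl_inl R N jtB).mp hadj
          have hsep := hS'sub _ _ hmem
          have hρroot : isRoot (nEdge E R N) ρ := by
            by_contra hc
            exact hnoint _ _ hadj ρ hc hmem
          have h1 : baseVar R N ρ ∈ sideVars jtB a b := sideVars_proj R N jtB hN hsep.1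
          have h2 : baseVar R N ρ ∈ sideVars jtB b a := sideVars_proj R N jtB hN hsep.2
          have hroot := isRoot_nEdge_baseVar R N hR hρroot
          have hSB := hSBroot a b _ hroot ⟨h1, h2⟩
          unfold thClusterJT
          rw [if_neg hbl]
          exact Set.mem_biUnion hadjB hSB
        · have hqa : q.1.1 = a := (TN_adj_inl_inr R N jtB).mp hadj
          obtain ⟨x, hxR, hx⟩ := q.1.2
          rw [hqa] at hx
          exact absurd (jtB.hosts_leaf _ _ hx) hbl
  -- conclude
  have hwidth : thWidthJT (jtN R N jtB hN) S' ≤ N * (w + 1) - 1 := by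
    haveI : Nonempty (JN R N jtB) := ⟨Sum.inl jtB.isTree.isConnected.nonempty.some⟩
    have hsup : (⨆ i, (thClusterJT (jtN R N jtB hN) S' i).ncard) ≤ N * (w + 1) :=
      ciSup_le hclu
    unfold thWidthJT
    omega
  have hmem' : thWidthJT (jtN R N jtB hN) S' ∈ {w' : ℕ |
      ∃ (J : Type _) (_ : Finite J) (jt : Jointree (nEdge E R N) J)
        (S : J → J → Set (NVar R N)), IsThinning jt S ∧ thWidthJT jt S = w'} :=
    ⟨JN R N jtB, inferInstance, jtN R N jtB hN, S', ⟨hreach', hterm'⟩, rfl⟩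
  exact le_trans (Nat.sInf_le hmem') hwidth

end Counterfactual
end

section
/- There exists a base network G with treewidth 2 whose twin network G^t has treewidth 4 = 2·2; hence the treewidth of a twin network can equal twice the treewidth of its base network. -/
namespace Counterfactual

attribute [local instance] Classical.propDecidable

attribute [-instance] Classical.propDecidable

section MyGeneric
variable {α : Type u}

lemma graph_ext' {G H : SimpleGraph α} (h : ∀ u v, G.Adj u v ↔ H.Adj u v) : G = H := by
  ext u v; exact h u v

lemma moralGraph_adj' (E : α → α → Prop) (u w : α) :
    (moralGraph E).Adj u w ↔ u ≠ w ∧ (E u w ∨ E w u ∨ ∃ c, E u c ∧ E w c) := Iff.rfl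

lemma eliminate_adj' (G : SimpleGraph α) (x u w : α) :
    (eliminate G x).Adj u w ↔
      u ≠ w ∧ u ≠ x ∧ w ≠ x ∧ (G.Adj u w ∨ (G.Adj u x ∧ G.Adj x w)) := Iff.rfl

instance moralGraph.decRel (E : α → α → Prop) [DecidableEq α] [DecidableRel E] [Fintype α] :
    DecidableRel (moralGraph E).Adj := fun u w =>
  decidable_of_iff' _ (moralGraph_adj' E u w)

instance eliminate.decRel (G : SimpleGraph α) [DecidableEq α] [DecidableRel G.Adj] (x : α) :
    DecidableRel (eliminate G x).Adj := fun u w =>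
  decidable_of_iff' _ (eliminate_adj' G x u w)

instance fromRel.decRel (r : α → α → Prop) [DecidableEq α] [DecidableRel r] :
    DecidableRel (SimpleGraph.fromRel r).Adj := fun u w =>
  decidable_of_iff' _ (SimpleGraph.fromRel_adj r u w)

instance closedNbhd.decMem (G : SimpleGraph α) [DecidableEq α] [DecidableRel G.Adj]
    (x y : α) : Decidable (y ∈ closedNbhd G x) :=
  decidable_of_iff (y = x ∨ G.Adj x y) (by simp [closedNbhd, Set.mem_insert_iff])

instance coeFinset.decMem [DecidableEq α] (F : Finset α) (y : α) :
    Decidable (y ∈ (↑F : Set α)) :=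
  decidable_of_iff (y ∈ F) (by simp)

instance isRoot.decPred (E : α → α → Prop) [DecidableRel E] [Fintype α] :
    DecidablePred (isRoot E) := fun x => inferInstanceAs (Decidable (∀ p, ¬ E p x))

instance twinEdge.decRel (E : α → α → Prop) [DecidableRel E] [Fintype α] :
    DecidableRel (twinEdge E) := fun a b =>
  match a, b with
  | Sum.inl p, Sum.inl x => inferInstanceAs (Decidable (E p x))
  | Sum.inl p, Sum.inr x => inferInstanceAs (Decidable (isRoot E p ∧ E p x.1))
  | Sum.inr p, Sum.inr x => inferInstanceAs (Decidable (E p.1 x.1))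
  | Sum.inr _, Sum.inl _ => inferInstanceAs (Decidable False)

lemma elimList_cons' (G : SimpleGraph α) (x : α) (xs : List α) :
    elimList G (x :: xs) = elimList (eliminate G x) xs := rfl

lemma elimList_nil' (G : SimpleGraph α) : elimList G [] = G := rfl

lemma elimList_adj' {G : SimpleGraph α} {u w : α} (L : List α)
    (h : G.Adj u w) (hu : u ∉ L) (hw : w ∉ L) : (elimList G L).Adj u w := by
  induction L generalizing G with
  | nil => exact h
  | cons x xs ih =>
      simp only [List.mem_cons, not_or] at hu hw
      exact ih ⟨h.ne, hu.1, hw.1, Or.inl h⟩ hu.2 hw.2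

lemma classicalBEq_eq [inst : DecidableEq α] :
    (@instBEqOfDecidableEq α fun a b => Classical.propDecidable (a = b))
      = @instBEqOfDecidableEq α inst := by
  congr 1
  funext a b
  exact Subsingleton.elim _ _

lemma clusterOf_eq [DecidableEq α] (E : α → α → Prop) (π : List α) (X : α) :
    clusterOf E π X = closedNbhd (graphAt (moralGraph E) π (π.idxOf X)) X := by
  unfold clusterOf
  rw [classicalBEq_eq]

lemma clusterOf_eq_idx [DecidableEq α] (E : α → α → Prop) (π : List α) (X : α) (i : ℕ)
    (h : π.idxOf X = i) :
    clusterOf E π X = closedNbhd (graphAt (moralGraph E) π i) X := by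
  rw [clusterOf_eq, h]

lemma indexOf_lt_of_mem_take [DecidableEq α] {l : List α} {x : α} {i : ℕ}
    (h : x ∈ l.take i) : l.idxOf x < i := by
  induction l generalizing i with
  | nil => simp at h
  | cons a t ih =>
      cases i with
      | zero => simp at h
      | succ j =>
          simp only [List.take_succ_cons, List.mem_cons] at h
          by_cases hxa : a = x
          · rw [List.idxOf_cons_eq _ hxa]; omega
          · rcases h with h | h
            · exact absurd h.symm hxa
            · rw [List.idxOf_cons_ne _ hxa]
              have := ih h
              omega

lemma ncard_le_of_subset_finset {s : Set α} {F : Finset α} (h : ∀ y, y ∈ s → y ∈ (↑F : Set α)) :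
    s.ncard ≤ F.card := by
  calc s.ncard ≤ (↑F : Set α).ncard := Set.ncard_le_ncard h (F.finite_toSet)
  _ = F.card := Set.ncard_coe_finset F

lemma orderWidth_le' {E : α → α → Prop} {π : List α} {k : ℕ}
    (hne : π ≠ []) (h : ∀ X ∈ π, (clusterOf E π X).ncard ≤ k + 1) :
    orderWidth E π ≤ k := by
  have hsup : sSup {n : ℕ | ∃ X ∈ π, n = (clusterOf E π X).ncard} ≤ k + 1 := by
    apply csSup_le
    · obtain ⟨X, hX⟩ := List.exists_mem_of_ne_nil π hne
      exact ⟨(clusterOf E π X).ncard, X, hX, rfl⟩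
    · rintro n ⟨X, hX, rfl⟩
      exact h X hX
  unfold orderWidth
  omega

lemma orderWidth_ge_of_minDeg [Fintype α] [DecidableEq α] {E : α → α → Prop} [DecidableRel E]
    {S : Finset α} {d : ℕ} (hS : S.Nonempty)
    (hdeg : ∀ v ∈ S, d + 1 ≤ (S.filter (fun w => w = v ∨ (moralGraph E).Adj v w)).card)
    {π : List α} (hπ : IsElimOrder π) : d ≤ orderWidth E π := by
  classical
  obtain ⟨X, hXS, hXmin⟩ := S.exists_min_image (fun v => π.idxOf v) hS
  have hXπ : X ∈ π := hπ.2 X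
  have hsub : ∀ y, y ∈ (S.filter (fun w => w = X ∨ (moralGraph E).Adj X w)) →
      y ∈ clusterOf E π X := by
    intro y hy
    rw [Finset.mem_filter] at hy
    obtain ⟨hyS, hy2⟩ := hy
    rw [clusterOf_eq]
    rcases hy2 with rfl | hadj
    · exact Set.mem_insert _ _
    · refine Set.mem_insert_of_mem _ ?_
      have hXn : X ∉ π.take (π.idxOf X) := fun h =>
        absurd (indexOf_lt_of_mem_take h) (by omega)
      have hyn : y ∉ π.take (π.idxOf X) := fun h => by
        have h2 := indexOf_lt_of_mem_take h
        have h3 := hXmin y hyS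
        omega
      exact elimList_adj' _ hadj hXn hyn
  have hcard : d + 1 ≤ (clusterOf E π X).ncard := by
    refine le_trans (hdeg X hXS) ?_
    calc (S.filter (fun w => w = X ∨ (moralGraph E).Adj X w)).card
        = ((S.filter (fun w => w = X ∨ (moralGraph E).Adj X w) : Finset α) : Set α).ncard := (Set.ncard_coe_finset _).symm
      _ ≤ (clusterOf E π X).ncard := by
          apply Set.ncard_le_ncard _ (Set.toFinite _)
          intro y hy
          exact hsub y (by simpa using hy)
  have hbdd : BddAbove {n : ℕ | ∃ Y ∈ π, n = (clusterOf E π Y).ncard} := by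
    refine ⟨Fintype.card α, ?_⟩
    rintro n ⟨Y, _, rfl⟩
    calc (clusterOf E π Y).ncard ≤ (Set.univ : Set α).ncard :=
          Set.ncard_le_ncard (Set.subset_univ _) Set.finite_univ
      _ = Fintype.card α := by rw [Set.ncard_univ, Nat.card_eq_fintype_card]
  have hmem : (clusterOf E π X).ncard ∈ {n : ℕ | ∃ Y ∈ π, n = (clusterOf E π Y).ncard} :=
    ⟨X, hXπ, rfl⟩
  have hle := le_csSup hbdd hmem
  unfold orderWidth
  omega

lemma treewidthOf_eq {E : α → α → Prop} {d : ℕ} (π : List α) (hπ : IsElimOrder π)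
    (hup : orderWidth E π ≤ d) (hlow : ∀ σ, IsElimOrder σ → d ≤ orderWidth E σ) :
    treewidthOf E = d := by
  have hne : {w | ∃ σ : List α, IsElimOrder σ ∧ orderWidth E σ = w}.Nonempty :=
    ⟨orderWidth E π, π, hπ, rfl⟩
  have h1 : treewidthOf E ≤ d := le_trans (Nat.sInf_le ⟨π, hπ, rfl⟩) hup
  obtain ⟨σ, hσ, hw⟩ := Nat.sInf_mem hne
  have h2 : d ≤ treewidthOf E := by
    have := hlow σ hσ
    unfold treewidthOf
    omega
  exact le_antisymm h1 h2

lemma isAcyclic_of_lt {E : α → α → Prop} (f : α → ℕ) (h : ∀ x y, E x y → f x < f y) :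
    IsAcyclicRel E := by
  intro x hx
  have : ∀ y, Relation.TransGen E x y → f x < f y := by
    intro y hy
    induction hy with
    | single h1 => exact h _ _ h1
    | tail _ h2 ih => exact lt_trans ih (h _ _ h2)
  exact absurd (this x hx) (lt_irrefl _)

end MyGeneric

-- concrete example
def bE : Fin 9 → Fin 9 → Prop := fun p c => (p, c) ∈ [((0,3) : Fin 9 × Fin 9), ((3,4) : Fin 9 × Fin 9), ((1,4) : Fin 9 × Fin 9), ((3,5) : Fin 9 × Fin 9), ((4,5) : Fin 9 × Fin 9), ((5,6) : Fin 9 × Fin 9), ((0,6) : Fin 9 × Fin 9), ((5,7) : Fin 9 × Fin 9), ((2,7) : Fin 9 × Fin 9), ((4,8) : Fin 9 × Fin 9), ((2,8) : Fin 9 × Fin 9)]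
instance bE.dec : DecidableRel bE := fun p c => by unfold bE; infer_instance
def ti (k : Fin 9) : TwinVar bE := Sum.inl k
instance (priority := 2000) twinBEq : BEq (TwinVar bE) := instBEqOfDecidableEq
instance (priority := 2000) twinLawfulBEq : LawfulBEq (TwinVar bE) := @instLawfulBEq _ _
def tidx : TwinVar bE → Fin 15 := fun t => match t with
  | Sum.inl k => ⟨k.val, by have := k.isLt; omega⟩
  | Sum.inr x => ⟨x.1.val + 6, by have := x.1.isLt; omega⟩
def tp (k : Fin 9) (h : ¬ isRoot bE k) : TwinVar bE := Sum.inr ⟨k, h⟩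
lemma hint3 : ¬ isRoot bE (3 : Fin 9) := by decide
lemma hint4 : ¬ isRoot bE (4 : Fin 9) := by decide
lemma hint5 : ¬ isRoot bE (5 : Fin 9) := by decide
lemma hint6 : ¬ isRoot bE (6 : Fin 9) := by decide
lemma hint7 : ¬ isRoot bE (7 : Fin 9) := by decide
lemma hint8 : ¬ isRoot bE (8 : Fin 9) := by decide
def bpi : List (Fin 9) := [(1 : Fin 9), (6 : Fin 9), (0 : Fin 9), (3 : Fin 9), (7 : Fin 9), (5 : Fin 9), (2 : Fin 9), (4 : Fin 9), (8 : Fin 9)]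
def tpi : List (TwinVar bE) := [(ti 3), (ti 6), (ti 7), (ti 5), (ti 4), (ti 8), (ti 1), (tp 3 hint3), (ti 0), (tp 4 hint4), (ti 2), (tp 5 hint5), (tp 6 hint6), (tp 7 hint7), (tp 8 hint8)]
def bL0 : List (Fin 9 × Fin 9) := [((0 : Fin 9), (3 : Fin 9)), ((0 : Fin 9), (5 : Fin 9)), ((0 : Fin 9), (6 : Fin 9)), ((1 : Fin 9), (3 : Fin 9)), ((1 : Fin 9), (4 : Fin 9)), ((2 : Fin 9), (4 : Fin 9)), ((2 : Fin 9), (5 : Fin 9)), ((2 : Fin 9), (7 : Fin 9)), ((2 : Fin 9), (8 : Fin 9)), ((3 : Fin 9), (4 : Fin 9)), ((3 : Fin 9), (5 : Fin 9)), ((4 : Fin 9), (5 : Fin 9)), ((4 : Fin 9), (8 : Fin 9)), ((5 : Fin 9), (6 : Fin 9)), ((5 : Fin 9), (7 : Fin 9))]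
def bG0 : SimpleGraph (Fin 9) := SimpleGraph.fromRel (fun u v => (u, v) ∈ bL0)
instance : DecidableRel bG0.Adj := fun u v => by unfold bG0; infer_instance
def bL1 : List (Fin 9 × Fin 9) := [((0 : Fin 9), (3 : Fin 9)), ((0 : Fin 9), (5 : Fin 9)), ((0 : Fin 9), (6 : Fin 9)), ((2 : Fin 9), (4 : Fin 9)), ((2 : Fin 9), (5 : Fin 9)), ((2 : Fin 9), (7 : Fin 9)), ((2 : Fin 9), (8 : Fin 9)), ((3 : Fin 9), (4 : Fin 9)), ((3 : Fin 9), (5 : Fin 9)), ((4 : Fin 9), (5 : Fin 9)), ((4 : Fin 9), (8 : Fin 9)), ((5 : Fin 9), (6 : Fin 9)), ((5 : Fin 9), (7 : Fin 9))]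
def bG1 : SimpleGraph (Fin 9) := SimpleGraph.fromRel (fun u v => (u, v) ∈ bL1)
instance : DecidableRel bG1.Adj := fun u v => by unfold bG1; infer_instance
def bL2 : List (Fin 9 × Fin 9) := [((0 : Fin 9), (3 : Fin 9)), ((0 : Fin 9), (5 : Fin 9)), ((2 : Fin 9), (4 : Fin 9)), ((2 : Fin 9), (5 : Fin 9)), ((2 : Fin 9), (7 : Fin 9)), ((2 : Fin 9), (8 : Fin 9)), ((3 : Fin 9), (4 : Fin 9)), ((3 : Fin 9), (5 : Fin 9)), ((4 : Fin 9), (5 : Fin 9)), ((4 : Fin 9), (8 : Fin 9)), ((5 : Fin 9), (7 : Fin 9))]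
def bG2 : SimpleGraph (Fin 9) := SimpleGraph.fromRel (fun u v => (u, v) ∈ bL2)
instance : DecidableRel bG2.Adj := fun u v => by unfold bG2; infer_instance
def bL3 : List (Fin 9 × Fin 9) := [((2 : Fin 9), (4 : Fin 9)), ((2 : Fin 9), (5 : Fin 9)), ((2 : Fin 9), (7 : Fin 9)), ((2 : Fin 9), (8 : Fin 9)), ((3 : Fin 9), (4 : Fin 9)), ((3 : Fin 9), (5 : Fin 9)), ((4 : Fin 9), (5 : Fin 9)), ((4 : Fin 9), (8 : Fin 9)), ((5 : Fin 9), (7 : Fin 9))]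
def bG3 : SimpleGraph (Fin 9) := SimpleGraph.fromRel (fun u v => (u, v) ∈ bL3)
instance : DecidableRel bG3.Adj := fun u v => by unfold bG3; infer_instance
def bL4 : List (Fin 9 × Fin 9) := [((2 : Fin 9), (4 : Fin 9)), ((2 : Fin 9), (5 : Fin 9)), ((2 : Fin 9), (7 : Fin 9)), ((2 : Fin 9), (8 : Fin 9)), ((4 : Fin 9), (5 : Fin 9)), ((4 : Fin 9), (8 : Fin 9)), ((5 : Fin 9), (7 : Fin 9))]
def bG4 : SimpleGraph (Fin 9) := SimpleGraph.fromRel (fun u v => (u, v) ∈ bL4)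
instance : DecidableRel bG4.Adj := fun u v => by unfold bG4; infer_instance
def bL5 : List (Fin 9 × Fin 9) := [((2 : Fin 9), (4 : Fin 9)), ((2 : Fin 9), (5 : Fin 9)), ((2 : Fin 9), (8 : Fin 9)), ((4 : Fin 9), (5 : Fin 9)), ((4 : Fin 9), (8 : Fin 9))]
def bG5 : SimpleGraph (Fin 9) := SimpleGraph.fromRel (fun u v => (u, v) ∈ bL5)
instance : DecidableRel bG5.Adj := fun u v => by unfold bG5; infer_instance
def bL6 : List (Fin 9 × Fin 9) := [((2 : Fin 9), (4 : Fin 9)), ((2 : Fin 9), (8 : Fin 9)), ((4 : Fin 9), (8 : Fin 9))]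
def bG6 : SimpleGraph (Fin 9) := SimpleGraph.fromRel (fun u v => (u, v) ∈ bL6)
instance : DecidableRel bG6.Adj := fun u v => by unfold bG6; infer_instance
def bL7 : List (Fin 9 × Fin 9) := [((4 : Fin 9), (8 : Fin 9))]
def bG7 : SimpleGraph (Fin 9) := SimpleGraph.fromRel (fun u v => (u, v) ∈ bL7)
instance : DecidableRel bG7.Adj := fun u v => by unfold bG7; infer_instance
def bL8 : List (Fin 9 × Fin 9) := []
def bG8 : SimpleGraph (Fin 9) := SimpleGraph.fromRel (fun u v => (u, v) ∈ bL8)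
instance : DecidableRel bG8.Adj := fun u v => by unfold bG8; infer_instance
def bL9 : List (Fin 9 × Fin 9) := []
def bG9 : SimpleGraph (Fin 9) := SimpleGraph.fromRel (fun u v => (u, v) ∈ bL9)
instance : DecidableRel bG9.Adj := fun u v => by unfold bG9; infer_instance
lemma bstep0 : moralGraph bE = bG0 := graph_ext' (by decide)
lemma bstep1 : eliminate bG0 (1 : Fin 9) = bG1 := graph_ext' (by decide)
lemma bstep2 : eliminate bG1 (6 : Fin 9) = bG2 := graph_ext' (by decide)
lemma bstep3 : eliminate bG2 (0 : Fin 9) = bG3 := graph_ext' (by decide)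
lemma bstep4 : eliminate bG3 (3 : Fin 9) = bG4 := graph_ext' (by decide)
lemma bstep5 : eliminate bG4 (7 : Fin 9) = bG5 := graph_ext' (by decide)
lemma bstep6 : eliminate bG5 (5 : Fin 9) = bG6 := graph_ext' (by decide)
lemma bstep7 : eliminate bG6 (2 : Fin 9) = bG7 := graph_ext' (by decide)
lemma bstep8 : eliminate bG7 (4 : Fin 9) = bG8 := graph_ext' (by decide)
lemma bstep9 : eliminate bG8 (8 : Fin 9) = bG9 := graph_ext' (by decide)
lemma bg0 : graphAt (moralGraph bE) bpi 0 = bG0 := by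
  show elimList (moralGraph bE) [] = bG0
  rw [bstep0, elimList_nil']
lemma bg1 : graphAt (moralGraph bE) bpi 1 = bG1 := by
  show elimList (moralGraph bE) [(1 : Fin 9)] = bG1
  rw [bstep0, elimList_cons', bstep1, elimList_nil']
lemma bg2 : graphAt (moralGraph bE) bpi 2 = bG2 := by
  show elimList (moralGraph bE) [(1 : Fin 9), (6 : Fin 9)] = bG2
  rw [bstep0, elimList_cons', bstep1, elimList_cons', bstep2, elimList_nil']
lemma bg3 : graphAt (moralGraph bE) bpi 3 = bG3 := by
  show elimList (moralGraph bE) [(1 : Fin 9), (6 : Fin 9), (0 : Fin 9)] = bG3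
  rw [bstep0, elimList_cons', bstep1, elimList_cons', bstep2, elimList_cons', bstep3, elimList_nil']
lemma bg4 : graphAt (moralGraph bE) bpi 4 = bG4 := by
  show elimList (moralGraph bE) [(1 : Fin 9), (6 : Fin 9), (0 : Fin 9), (3 : Fin 9)] = bG4
  rw [bstep0, elimList_cons', bstep1, elimList_cons', bstep2, elimList_cons', bstep3, elimList_cons', bstep4, elimList_nil']
lemma bg5 : graphAt (moralGraph bE) bpi 5 = bG5 := by
  show elimList (moralGraph bE) [(1 : Fin 9), (6 : Fin 9), (0 : Fin 9), (3 : Fin 9), (7 : Fin 9)] = bG5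
  rw [bstep0, elimList_cons', bstep1, elimList_cons', bstep2, elimList_cons', bstep3, elimList_cons', bstep4, elimList_cons', bstep5, elimList_nil']
lemma bg6 : graphAt (moralGraph bE) bpi 6 = bG6 := by
  show elimList (moralGraph bE) [(1 : Fin 9), (6 : Fin 9), (0 : Fin 9), (3 : Fin 9), (7 : Fin 9), (5 : Fin 9)] = bG6
  rw [bstep0, elimList_cons', bstep1, elimList_cons', bstep2, elimList_cons', bstep3, elimList_cons', bstep4, elimList_cons', bstep5, elimList_cons', bstep6, elimList_nil']
lemma bg7 : graphAt (moralGraph bE) bpi 7 = bG7 := by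
  show elimList (moralGraph bE) [(1 : Fin 9), (6 : Fin 9), (0 : Fin 9), (3 : Fin 9), (7 : Fin 9), (5 : Fin 9), (2 : Fin 9)] = bG7
  rw [bstep0, elimList_cons', bstep1, elimList_cons', bstep2, elimList_cons', bstep3, elimList_cons', bstep4, elimList_cons', bstep5, elimList_cons', bstep6, elimList_cons', bstep7, elimList_nil']
lemma bg8 : graphAt (moralGraph bE) bpi 8 = bG8 := by
  show elimList (moralGraph bE) [(1 : Fin 9), (6 : Fin 9), (0 : Fin 9), (3 : Fin 9), (7 : Fin 9), (5 : Fin 9), (2 : Fin 9), (4 : Fin 9)] = bG8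
  rw [bstep0, elimList_cons', bstep1, elimList_cons', bstep2, elimList_cons', bstep3, elimList_cons', bstep4, elimList_cons', bstep5, elimList_cons', bstep6, elimList_cons', bstep7, elimList_cons', bstep8, elimList_nil']
lemma bc0 : (clusterOf bE bpi (1 : Fin 9)).ncard ≤ 3 := by
  rw [clusterOf_eq_idx bE bpi (1 : Fin 9) 0 (by decide), bg0]
  exact le_trans (ncard_le_of_subset_finset (F := {(1 : Fin 9), (3 : Fin 9), (4 : Fin 9)}) (by decide)) (by decide)
lemma bc1 : (clusterOf bE bpi (6 : Fin 9)).ncard ≤ 3 := by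
  rw [clusterOf_eq_idx bE bpi (6 : Fin 9) 1 (by decide), bg1]
  exact le_trans (ncard_le_of_subset_finset (F := {(6 : Fin 9), (0 : Fin 9), (5 : Fin 9)}) (by decide)) (by decide)
lemma bc2 : (clusterOf bE bpi (0 : Fin 9)).ncard ≤ 3 := by
  rw [clusterOf_eq_idx bE bpi (0 : Fin 9) 2 (by decide), bg2]
  exact le_trans (ncard_le_of_subset_finset (F := {(0 : Fin 9), (3 : Fin 9), (5 : Fin 9)}) (by decide)) (by decide)
lemma bc3 : (clusterOf bE bpi (3 : Fin 9)).ncard ≤ 3 := by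
  rw [clusterOf_eq_idx bE bpi (3 : Fin 9) 3 (by decide), bg3]
  exact le_trans (ncard_le_of_subset_finset (F := {(3 : Fin 9), (4 : Fin 9), (5 : Fin 9)}) (by decide)) (by decide)
lemma bc4 : (clusterOf bE bpi (7 : Fin 9)).ncard ≤ 3 := by
  rw [clusterOf_eq_idx bE bpi (7 : Fin 9) 4 (by decide), bg4]
  exact le_trans (ncard_le_of_subset_finset (F := {(7 : Fin 9), (2 : Fin 9), (5 : Fin 9)}) (by decide)) (by decide)
lemma bc5 : (clusterOf bE bpi (5 : Fin 9)).ncard ≤ 3 := by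
  rw [clusterOf_eq_idx bE bpi (5 : Fin 9) 5 (by decide), bg5]
  exact le_trans (ncard_le_of_subset_finset (F := {(5 : Fin 9), (2 : Fin 9), (4 : Fin 9)}) (by decide)) (by decide)
lemma bc6 : (clusterOf bE bpi (2 : Fin 9)).ncard ≤ 3 := by
  rw [clusterOf_eq_idx bE bpi (2 : Fin 9) 6 (by decide), bg6]
  exact le_trans (ncard_le_of_subset_finset (F := {(2 : Fin 9), (4 : Fin 9), (8 : Fin 9)}) (by decide)) (by decide)
lemma bc7 : (clusterOf bE bpi (4 : Fin 9)).ncard ≤ 3 := by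
  rw [clusterOf_eq_idx bE bpi (4 : Fin 9) 7 (by decide), bg7]
  exact le_trans (ncard_le_of_subset_finset (F := {(4 : Fin 9), (8 : Fin 9)}) (by decide)) (by decide)
lemma bc8 : (clusterOf bE bpi (8 : Fin 9)).ncard ≤ 3 := by
  rw [clusterOf_eq_idx bE bpi (8 : Fin 9) 8 (by decide), bg8]
  exact le_trans (ncard_le_of_subset_finset (F := {(8 : Fin 9)}) (by decide)) (by decide)
lemma b_elim : IsElimOrder bpi := ⟨by decide, by decide⟩
lemma b_upper : orderWidth bE bpi ≤ 2 := by
  apply orderWidth_le' (by decide)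
  intro X hX
  fin_cases hX
  · exact bc0
  · exact bc1
  · exact bc2
  · exact bc3
  · exact bc4
  · exact bc5
  · exact bc6
  · exact bc7
  · exact bc8
lemma b_lower : ∀ σ, IsElimOrder σ → 2 ≤ orderWidth bE σ := fun σ hσ =>
  orderWidth_ge_of_minDeg (S := {(3 : Fin 9), 4, 5}) (by decide) (by decide) hσ
def tL0 : List (Fin 15 × Fin 15) := [((0 : Fin 15), (3 : Fin 15)), ((0 : Fin 15), (5 : Fin 15)), ((0 : Fin 15), (6 : Fin 15)), ((0 : Fin 15), (9 : Fin 15)), ((0 : Fin 15), (11 : Fin 15)), ((0 : Fin 15), (12 : Fin 15)), ((1 : Fin 15), (3 : Fin 15)), ((1 : Fin 15), (4 : Fin 15)), ((1 : Fin 15), (9 : Fin 15)), ((1 : Fin 15), (10 : Fin 15)), ((2 : Fin 15), (4 : Fin 15)), ((2 : Fin 15), (5 : Fin 15)), ((2 : Fin 15), (7 : Fin 15)), ((2 : Fin 15), (8 : Fin 15)), ((2 : Fin 15), (10 : Fin 15)), ((2 : Fin 15), (11 : Fin 15)), ((2 : Fin 15), (13 : Fin 15)), ((2 : Fin 15), (14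 : Fin 15)), ((3 : Fin 15), (4 : Fin 15)), ((3 : Fin 15), (5 : Fin 15)), ((4 : Fin 15), (5 : Fin 15)), ((4 : Fin 15), (8 : Fin 15)), ((5 : Fin 15), (6 : Fin 15)), ((5 : Fin 15), (7 : Fin 15)), ((9 : Fin 15), (10 : Fin 15)), ((9 : Fin 15), (11 : Fin 15)), ((10 : Fin 15), (11 : Fin 15)), ((10 : Fin 15), (14 : Fin 15)), ((11 : Fin 15), (12 : Fin 15)), ((11 : Fin 15), (13 : Fin 15))]
def tG0 : SimpleGraph (TwinVar bE) := SimpleGraph.fromRel (fun u v => (tidx u, tidx v) ∈ tL0)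
instance : DecidableRel tG0.Adj := fun u v => by unfold tG0; infer_instance
def tL1 : List (Fin 15 × Fin 15) := [((0 : Fin 15), (1 : Fin 15)), ((0 : Fin 15), (4 : Fin 15)), ((0 : Fin 15), (5 : Fin 15)), ((0 : Fin 15), (6 : Fin 15)), ((0 : Fin 15), (9 : Fin 15)), ((0 : Fin 15), (11 : Fin 15)), ((0 : Fin 15), (12 : Fin 15)), ((1 : Fin 15), (4 : Fin 15)), ((1 : Fin 15), (5 : Fin 15)), ((1 : Fin 15), (9 : Fin 15)), ((1 : Fin 15), (10 : Fin 15)), ((2 : Fin 15), (4 : Fin 15)), ((2 : Fin 15), (5 : Fin 15)), ((2 : Fin 15), (7 : Fin 15)), ((2 : Fin 15), (8 : Fin 15)), ((2 : Fin 15), (10 : Fin 15)), ((2 : Fin 15), (11 : Fin 15)), ((2 : Fin 15), (13 : Fin 15)), ((2 : Fin 15), (14 : Fin 15)), ((4 : Fin 15), (5 : Fin 15)), ((4 : Fin 15), (8 : Fin 15)), ((5 : Fin 15), (6 : Fin 15)), ((5 : Fin 15), (7 : Fin 15)), ((9 : Fin 15), (10 : Fin 15)), ((9 : Fin 15), (11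 : Fin 15)), ((10 : Fin 15), (11 : Fin 15)), ((10 : Fin 15), (14 : Fin 15)), ((11 : Fin 15), (12 : Fin 15)), ((11 : Fin 15), (13 : Fin 15))]
def tG1 : SimpleGraph (TwinVar bE) := SimpleGraph.fromRel (fun u v => (tidx u, tidx v) ∈ tL1)
instance : DecidableRel tG1.Adj := fun u v => by unfold tG1; infer_instance
def tL2 : List (Fin 15 × Fin 15) := [((0 : Fin 15), (1 : Fin 15)), ((0 : Fin 15), (4 : Fin 15)), ((0 : Fin 15), (5 : Fin 15)), ((0 : Fin 15), (9 : Fin 15)), ((0 : Fin 15), (11 : Fin 15)), ((0 : Fin 15), (12 : Fin 15)), ((1 : Fin 15), (4 : Fin 15)), ((1 : Fin 15), (5 : Fin 15)), ((1 : Fin 15), (9 : Fin 15)), ((1 : Fin 15), (10 : Fin 15)), ((2 : Fin 15), (4 : Fin 15)), ((2 : Fin 15), (5 : Fin 15)), ((2 : Fin 15), (7 : Fin 15)), ((2 : Fin 15), (8 : Fin 15)), ((2 : Fin 15), (10 : Fin 15)), ((2 : Fin 15), (11 : Fin 15)), ((2 : Fin 15), (13 : Fin 15)), ((2 : Fin 15),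 (14 : Fin 15)), ((4 : Fin 15), (5 : Fin 15)), ((4 : Fin 15), (8 : Fin 15)), ((5 : Fin 15), (7 : Fin 15)), ((9 : Fin 15), (10 : Fin 15)), ((9 : Fin 15), (11 : Fin 15)), ((10 : Fin 15), (11 : Fin 15)), ((10 : Fin 15), (14 : Fin 15)), ((11 : Fin 15), (12 : Fin 15)), ((11 : Fin 15), (13 : Fin 15))]
def tG2 : SimpleGraph (TwinVar bE) := SimpleGraph.fromRel (fun u v => (tidx u, tidx v) ∈ tL2)
instance : DecidableRel tG2.Adj := fun u v => by unfold tG2; infer_instance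
def tL3 : List (Fin 15 × Fin 15) := [((0 : Fin 15), (1 : Fin 15)), ((0 : Fin 15), (4 : Fin 15)), ((0 : Fin 15), (5 : Fin 15)), ((0 : Fin 15), (9 : Fin 15)), ((0 : Fin 15), (11 : Fin 15)), ((0 : Fin 15), (12 : Fin 15)), ((1 : Fin 15), (4 : Fin 15)), ((1 : Fin 15), (5 : Fin 15)), ((1 : Fin 15), (9 : Fin 15)), ((1 : Fin 15), (10 : Fin 15)), ((2 : Fin 15), (4 : Fin 15)), ((2 : Fin 15), (5 : Fin 15)), ((2 : Fin 15), (8 : Fin 15)), ((2 : Fin 15), (10 : Fin 15)), ((2 : Fin 15), (11 : Fin 15)), ((2 : Fin 15), (13 : Fin 15)), ((2 : Fin 15), (14 : Fin 15)), ((4 : Fin 15), (5 : Fin 15)), ((4 : Fin 15), (8 : Fin 15)), ((9 : Fin 15), (10 : Fin 15)), ((9 : Fin 15), (11 : Fin 15)), ((10 : Fin 15), (11 : Fin 15)), ((10 : Fin 15), (14 : Fin 15)), ((11 : Fin 15), (12 : Fin 15)), ((11 : Fin 15), (13 : Fin 15))]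
def tG3 : SimpleGraph (TwinVar bE) := SimpleGraph.fromRel (fun u v => (tidx u, tidx v) ∈ tL3)
instance : DecidableRel tG3.Adj := fun u v => by unfold tG3; infer_instance
def tL4 : List (Fin 15 × Fin 15) := [((0 : Fin 15), (1 : Fin 15)), ((0 : Fin 15), (2 : Fin 15)), ((0 : Fin 15), (4 : Fin 15)), ((0 : Fin 15), (9 : Fin 15)), ((0 : Fin 15), (11 : Fin 15)), ((0 : Fin 15), (12 : Fin 15)), ((1 : Fin 15), (2 : Fin 15)), ((1 : Fin 15), (4 : Fin 15)), ((1 : Fin 15), (9 : Fin 15)), ((1 : Fin 15), (10 : Fin 15)), ((2 : Fin 15), (4 : Fin 15)), ((2 : Fin 15), (8 : Fin 15)), ((2 : Fin 15), (10 : Fin 15)), ((2 : Fin 15), (11 : Fin 15)), ((2 : Fin 15), (13 : Fin 15)), ((2 : Fin 15), (14 : Fin 15)), ((4 : Fin 15), (8 : Fin 15)), ((9 : Fin 15), (10 : Fin 15)), ((9 : Fin 15), (11 : Fin 15)), ((10 : Fin 15), (11 : Fin 15)), ((10 : Fin 15), (14 : Fin 15)), ((11 : Fin 15), (12 : Fin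 15)), ((11 : Fin 15), (13 : Fin 15))]
def tG4 : SimpleGraph (TwinVar bE) := SimpleGraph.fromRel (fun u v => (tidx u, tidx v) ∈ tL4)
instance : DecidableRel tG4.Adj := fun u v => by unfold tG4; infer_instance
def tL5 : List (Fin 15 × Fin 15) := [((0 : Fin 15), (1 : Fin 15)), ((0 : Fin 15), (2 : Fin 15)), ((0 : Fin 15), (8 : Fin 15)), ((0 : Fin 15), (9 : Fin 15)), ((0 : Fin 15), (11 : Fin 15)), ((0 : Fin 15), (12 : Fin 15)), ((1 : Fin 15), (2 : Fin 15)), ((1 : Fin 15), (8 : Fin 15)), ((1 : Fin 15), (9 : Fin 15)), ((1 : Fin 15), (10 : Fin 15)), ((2 : Fin 15), (8 : Fin 15)), ((2 : Fin 15), (10 : Fin 15)), ((2 : Fin 15), (11 : Fin 15)), ((2 : Fin 15), (13 : Fin 15)), ((2 : Fin 15), (14 : Fin 15)), ((9 : Fin 15), (10 : Fin 15)), ((9 : Fin 15), (11 : Fin 15)), ((10 : Fin 15), (11 : Fin 15)), ((10 : Fin 15), (14 : Fin 15)), ((11 : Fin 15), (12 : Fin 15)), ((11 : Fin 15), (13 :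 Fin 15))]
def tG5 : SimpleGraph (TwinVar bE) := SimpleGraph.fromRel (fun u v => (tidx u, tidx v) ∈ tL5)
instance : DecidableRel tG5.Adj := fun u v => by unfold tG5; infer_instance
def tL6 : List (Fin 15 × Fin 15) := [((0 : Fin 15), (1 : Fin 15)), ((0 : Fin 15), (2 : Fin 15)), ((0 : Fin 15), (9 : Fin 15)), ((0 : Fin 15), (11 : Fin 15)), ((0 : Fin 15), (12 : Fin 15)), ((1 : Fin 15), (2 : Fin 15)), ((1 : Fin 15), (9 : Fin 15)), ((1 : Fin 15), (10 : Fin 15)), ((2 : Fin 15), (10 : Fin 15)), ((2 : Fin 15), (11 : Fin 15)), ((2 : Fin 15), (13 : Fin 15)), ((2 : Fin 15), (14 : Fin 15)), ((9 : Fin 15), (10 : Fin 15)), ((9 : Fin 15), (11 : Fin 15)), ((10 : Fin 15), (11 : Fin 15)), ((10 : Fin 15), (14 : Fin 15)), ((11 : Fin 15), (12 : Fin 15)), ((11 : Fin 15), (13 : Fin 15))]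
def tG6 : SimpleGraph (TwinVar bE) := SimpleGraph.fromRel (fun u v => (tidx u, tidx v) ∈ tL6)
instance : DecidableRel tG6.Adj := fun u v => by unfold tG6; infer_instance
def tL7 : List (Fin 15 × Fin 15) := [((0 : Fin 15), (2 : Fin 15)), ((0 : Fin 15), (9 : Fin 15)), ((0 : Fin 15), (10 : Fin 15)), ((0 : Fin 15), (11 : Fin 15)), ((0 : Fin 15), (12 : Fin 15)), ((2 : Fin 15), (9 : Fin 15)), ((2 : Fin 15), (10 : Fin 15)), ((2 : Fin 15), (11 : Fin 15)), ((2 : Fin 15), (13 : Fin 15)), ((2 : Fin 15), (14 : Fin 15)), ((9 : Fin 15), (10 : Fin 15)), ((9 : Fin 15), (11 : Fin 15)), ((10 : Fin 15), (11 : Fin 15)), ((10 : Fin 15), (14 : Fin 15)), ((11 : Fin 15), (12 : Fin 15)), ((11 : Fin 15), (13 : Fin 15))]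
def tG7 : SimpleGraph (TwinVar bE) := SimpleGraph.fromRel (fun u v => (tidx u, tidx v) ∈ tL7)
instance : DecidableRel tG7.Adj := fun u v => by unfold tG7; infer_instance
def tL8 : List (Fin 15 × Fin 15) := [((0 : Fin 15), (2 : Fin 15)), ((0 : Fin 15), (10 : Fin 15)), ((0 : Fin 15), (11 : Fin 15)), ((0 : Fin 15), (12 : Fin 15)), ((2 : Fin 15), (10 : Fin 15)), ((2 : Fin 15), (11 : Fin 15)), ((2 : Fin 15), (13 : Fin 15)), ((2 : Fin 15), (14 : Fin 15)), ((10 : Fin 15), (11 : Fin 15)), ((10 : Fin 15), (14 : Fin 15)), ((11 : Fin 15), (12 : Fin 15)), ((11 : Fin 15), (13 : Fin 15))]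
def tG8 : SimpleGraph (TwinVar bE) := SimpleGraph.fromRel (fun u v => (tidx u, tidx v) ∈ tL8)
instance : DecidableRel tG8.Adj := fun u v => by unfold tG8; infer_instance
def tL9 : List (Fin 15 × Fin 15) := [((2 : Fin 15), (10 : Fin 15)), ((2 : Fin 15), (11 : Fin 15)), ((2 : Fin 15), (12 : Fin 15)), ((2 : Fin 15), (13 : Fin 15)), ((2 : Fin 15), (14 : Fin 15)), ((10 : Fin 15), (11 : Fin 15)), ((10 : Fin 15), (12 : Fin 15)), ((10 : Fin 15), (14 : Fin 15)), ((11 : Fin 15), (12 : Fin 15)), ((11 : Fin 15), (13 : Fin 15))]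
def tG9 : SimpleGraph (TwinVar bE) := SimpleGraph.fromRel (fun u v => (tidx u, tidx v) ∈ tL9)
instance : DecidableRel tG9.Adj := fun u v => by unfold tG9; infer_instance
def tL10 : List (Fin 15 × Fin 15) := [((2 : Fin 15), (11 : Fin 15)), ((2 : Fin 15), (12 : Fin 15)), ((2 : Fin 15), (13 : Fin 15)), ((2 : Fin 15), (14 : Fin 15)), ((11 : Fin 15), (12 : Fin 15)), ((11 : Fin 15), (13 : Fin 15)), ((11 : Fin 15), (14 : Fin 15)), ((12 : Fin 15), (14 : Fin 15))]
def tG10 : SimpleGraph (TwinVar bE) := SimpleGraph.fromRel (fun u v => (tidx u, tidx v) ∈ tL10)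
instance : DecidableRel tG10.Adj := fun u v => by unfold tG10; infer_instance
def tL11 : List (Fin 15 × Fin 15) := [((11 : Fin 15), (12 : Fin 15)), ((11 : Fin 15), (13 : Fin 15)), ((11 : Fin 15), (14 : Fin 15)), ((12 : Fin 15), (13 : Fin 15)), ((12 : Fin 15), (14 : Fin 15)), ((13 : Fin 15), (14 : Fin 15))]
def tG11 : SimpleGraph (TwinVar bE) := SimpleGraph.fromRel (fun u v => (tidx u, tidx v) ∈ tL11)
instance : DecidableRel tG11.Adj := fun u v => by unfold tG11; infer_instance
def tL12 : List (Fin 15 × Fin 15) := [((12 : Fin 15), (13 : Fin 15)), ((12 : Fin 15), (14 : Fin 15)), ((13 : Fin 15), (14 : Fin 15))]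
def tG12 : SimpleGraph (TwinVar bE) := SimpleGraph.fromRel (fun u v => (tidx u, tidx v) ∈ tL12)
instance : DecidableRel tG12.Adj := fun u v => by unfold tG12; infer_instance
def tL13 : List (Fin 15 × Fin 15) := [((13 : Fin 15), (14 : Fin 15))]
def tG13 : SimpleGraph (TwinVar bE) := SimpleGraph.fromRel (fun u v => (tidx u, tidx v) ∈ tL13)
instance : DecidableRel tG13.Adj := fun u v => by unfold tG13; infer_instance
def tL14 : List (Fin 15 × Fin 15) := []
def tG14 : SimpleGraph (TwinVar bE) := SimpleGraph.fromRel (fun u v => (tidx u, tidx v) ∈ tL14)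
instance : DecidableRel tG14.Adj := fun u v => by unfold tG14; infer_instance
def tL15 : List (Fin 15 × Fin 15) := []
def tG15 : SimpleGraph (TwinVar bE) := SimpleGraph.fromRel (fun u v => (tidx u, tidx v) ∈ tL15)
instance : DecidableRel tG15.Adj := fun u v => by unfold tG15; infer_instance
lemma tstep0 : moralGraph (twinEdge bE) = tG0 := graph_ext' (by decide)
lemma tstep1 : eliminate tG0 (ti 3) = tG1 := graph_ext' (by decide)
lemma tstep2 : eliminate tG1 (ti 6) = tG2 := graph_ext' (by decide)
lemma tstep3 : eliminate tG2 (ti 7) = tG3 := graph_ext' (by decide)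
lemma tstep4 : eliminate tG3 (ti 5) = tG4 := graph_ext' (by decide)
lemma tstep5 : eliminate tG4 (ti 4) = tG5 := graph_ext' (by decide)
lemma tstep6 : eliminate tG5 (ti 8) = tG6 := graph_ext' (by decide)
lemma tstep7 : eliminate tG6 (ti 1) = tG7 := graph_ext' (by decide)
lemma tstep8 : eliminate tG7 (tp 3 hint3) = tG8 := graph_ext' (by decide)
lemma tstep9 : eliminate tG8 (ti 0) = tG9 := graph_ext' (by decide)
lemma tstep10 : eliminate tG9 (tp 4 hint4) = tG10 := graph_ext' (by decide)
lemma tstep11 : eliminate tG10 (ti 2) = tG11 := graph_ext' (by decide)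
lemma tstep12 : eliminate tG11 (tp 5 hint5) = tG12 := graph_ext' (by decide)
lemma tstep13 : eliminate tG12 (tp 6 hint6) = tG13 := graph_ext' (by decide)
lemma tstep14 : eliminate tG13 (tp 7 hint7) = tG14 := graph_ext' (by decide)
lemma tstep15 : eliminate tG14 (tp 8 hint8) = tG15 := graph_ext' (by decide)
lemma tg0 : graphAt (moralGraph (twinEdge bE)) tpi 0 = tG0 := by
  show elimList (moralGraph (twinEdge bE)) [] = tG0
  rw [tstep0, elimList_nil']
lemma tg1 : graphAt (moralGraph (twinEdge bE)) tpi 1 = tG1 := by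
  show elimList (moralGraph (twinEdge bE)) [(ti 3)] = tG1
  rw [tstep0, elimList_cons', tstep1, elimList_nil']
lemma tg2 : graphAt (moralGraph (twinEdge bE)) tpi 2 = tG2 := by
  show elimList (moralGraph (twinEdge bE)) [(ti 3), (ti 6)] = tG2
  rw [tstep0, elimList_cons', tstep1, elimList_cons', tstep2, elimList_nil']
lemma tg3 : graphAt (moralGraph (twinEdge bE)) tpi 3 = tG3 := by
  show elimList (moralGraph (twinEdge bE)) [(ti 3), (ti 6), (ti 7)] = tG3
  rw [tstep0, elimList_cons', tstep1, elimList_cons', tstep2, elimList_cons', tstep3, elimList_nil']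
lemma tg4 : graphAt (moralGraph (twinEdge bE)) tpi 4 = tG4 := by
  show elimList (moralGraph (twinEdge bE)) [(ti 3), (ti 6), (ti 7), (ti 5)] = tG4
  rw [tstep0, elimList_cons', tstep1, elimList_cons', tstep2, elimList_cons', tstep3, elimList_cons', tstep4, elimList_nil']
lemma tg5 : graphAt (moralGraph (twinEdge bE)) tpi 5 = tG5 := by
  show elimList (moralGraph (twinEdge bE)) [(ti 3), (ti 6), (ti 7), (ti 5), (ti 4)] = tG5
  rw [tstep0, elimList_cons', tstep1, elimList_cons', tstep2, elimList_cons', tstep3, elimList_cons', tstep4, elimList_cons', tstep5, elimList_nil']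
lemma tg6 : graphAt (moralGraph (twinEdge bE)) tpi 6 = tG6 := by
  show elimList (moralGraph (twinEdge bE)) [(ti 3), (ti 6), (ti 7), (ti 5), (ti 4), (ti 8)] = tG6
  rw [tstep0, elimList_cons', tstep1, elimList_cons', tstep2, elimList_cons', tstep3, elimList_cons', tstep4, elimList_cons', tstep5, elimList_cons', tstep6, elimList_nil']
lemma tg7 : graphAt (moralGraph (twinEdge bE)) tpi 7 = tG7 := by
  show elimList (moralGraph (twinEdge bE)) [(ti 3), (ti 6), (ti 7), (ti 5), (ti 4), (ti 8), (ti 1)] = tG7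
  rw [tstep0, elimList_cons', tstep1, elimList_cons', tstep2, elimList_cons', tstep3, elimList_cons', tstep4, elimList_cons', tstep5, elimList_cons', tstep6, elimList_cons', tstep7, elimList_nil']
lemma tg8 : graphAt (moralGraph (twinEdge bE)) tpi 8 = tG8 := by
  show elimList (moralGraph (twinEdge bE)) [(ti 3), (ti 6), (ti 7), (ti 5), (ti 4), (ti 8), (ti 1), (tp 3 hint3)] = tG8
  rw [tstep0, elimList_cons', tstep1, elimList_cons', tstep2, elimList_cons', tstep3, elimList_cons', tstep4, elimList_cons', tstep5, elimList_cons', tstep6, elimList_cons', tstep7, elimList_cons', tstep8, elimList_nil']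
lemma tg9 : graphAt (moralGraph (twinEdge bE)) tpi 9 = tG9 := by
  show elimList (moralGraph (twinEdge bE)) [(ti 3), (ti 6), (ti 7), (ti 5), (ti 4), (ti 8), (ti 1), (tp 3 hint3), (ti 0)] = tG9
  rw [tstep0, elimList_cons', tstep1, elimList_cons', tstep2, elimList_cons', tstep3, elimList_cons', tstep4, elimList_cons', tstep5, elimList_cons', tstep6, elimList_cons', tstep7, elimList_cons', tstep8, elimList_cons', tstep9, elimList_nil']
lemma tg10 : graphAt (moralGraph (twinEdge bE)) tpi 10 = tG10 := by
  show elimList (moralGraph (twinEdge bE)) [(ti 3), (ti 6), (ti 7), (ti 5), (ti 4), (ti 8), (ti 1), (tp 3 hint3), (ti 0), (tp 4 hint4)] = tG10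
  rw [tstep0, elimList_cons', tstep1, elimList_cons', tstep2, elimList_cons', tstep3, elimList_cons', tstep4, elimList_cons', tstep5, elimList_cons', tstep6, elimList_cons', tstep7, elimList_cons', tstep8, elimList_cons', tstep9, elimList_cons', tstep10, elimList_nil']
lemma tg11 : graphAt (moralGraph (twinEdge bE)) tpi 11 = tG11 := by
  show elimList (moralGraph (twinEdge bE)) [(ti 3), (ti 6), (ti 7), (ti 5), (ti 4), (ti 8), (ti 1), (tp 3 hint3), (ti 0), (tp 4 hint4), (ti 2)] = tG11
  rw [tstep0, elimList_cons', tstep1, elimList_cons', tstep2, elimList_cons', tstep3, elimList_cons', tstep4, elimList_cons', tstep5, elimList_cons', tstep6, elimList_cons', tstep7, elimList_cons', tstep8, elimList_cons', tstep9, elimList_cons', tstep10, elimList_cons', tstep11, elimList_nil']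
lemma tg12 : graphAt (moralGraph (twinEdge bE)) tpi 12 = tG12 := by
  show elimList (moralGraph (twinEdge bE)) [(ti 3), (ti 6), (ti 7), (ti 5), (ti 4), (ti 8), (ti 1), (tp 3 hint3), (ti 0), (tp 4 hint4), (ti 2), (tp 5 hint5)] = tG12
  rw [tstep0, elimList_cons', tstep1, elimList_cons', tstep2, elimList_cons', tstep3, elimList_cons', tstep4, elimList_cons', tstep5, elimList_cons', tstep6, elimList_cons', tstep7, elimList_cons', tstep8, elimList_cons', tstep9, elimList_cons', tstep10, elimList_cons', tstep11, elimList_cons', tstep12, elimList_nil']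
lemma tg13 : graphAt (moralGraph (twinEdge bE)) tpi 13 = tG13 := by
  show elimList (moralGraph (twinEdge bE)) [(ti 3), (ti 6), (ti 7), (ti 5), (ti 4), (ti 8), (ti 1), (tp 3 hint3), (ti 0), (tp 4 hint4), (ti 2), (tp 5 hint5), (tp 6 hint6)] = tG13
  rw [tstep0, elimList_cons', tstep1, elimList_cons', tstep2, elimList_cons', tstep3, elimList_cons', tstep4, elimList_cons', tstep5, elimList_cons', tstep6, elimList_cons', tstep7, elimList_cons', tstep8, elimList_cons', tstep9, elimList_cons', tstep10, elimList_cons', tstep11, elimList_cons', tstep12, elimList_cons', tstep13, elimList_nil']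
lemma tg14 : graphAt (moralGraph (twinEdge bE)) tpi 14 = tG14 := by
  show elimList (moralGraph (twinEdge bE)) [(ti 3), (ti 6), (ti 7), (ti 5), (ti 4), (ti 8), (ti 1), (tp 3 hint3), (ti 0), (tp 4 hint4), (ti 2), (tp 5 hint5), (tp 6 hint6), (tp 7 hint7)] = tG14
  rw [tstep0, elimList_cons', tstep1, elimList_cons', tstep2, elimList_cons', tstep3, elimList_cons', tstep4, elimList_cons', tstep5, elimList_cons', tstep6, elimList_cons', tstep7, elimList_cons', tstep8, elimList_cons', tstep9, elimList_cons', tstep10, elimList_cons', tstep11, elimList_cons', tstep12, elimList_cons', tstep13, elimList_cons', tstep14, elimList_nil']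
lemma tc0 : (clusterOf (twinEdge bE) tpi (ti 3)).ncard ≤ 5 := by
  rw [clusterOf_eq_idx (twinEdge bE) tpi (ti 3) 0 (by decide), tg0]
  exact le_trans (ncard_le_of_subset_finset (F := {(ti 3), (ti 0), (ti 1), (ti 4), (ti 5)}) (by decide)) (by decide)
lemma tc1 : (clusterOf (twinEdge bE) tpi (ti 6)).ncard ≤ 5 := by
  rw [clusterOf_eq_idx (twinEdge bE) tpi (ti 6) 1 (by decide), tg1]
  exact le_trans (ncard_le_of_subset_finset (F := {(ti 6), (ti 0), (ti 5)}) (by decide)) (by decide)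
lemma tc2 : (clusterOf (twinEdge bE) tpi (ti 7)).ncard ≤ 5 := by
  rw [clusterOf_eq_idx (twinEdge bE) tpi (ti 7) 2 (by decide), tg2]
  exact le_trans (ncard_le_of_subset_finset (F := {(ti 7), (ti 2), (ti 5)}) (by decide)) (by decide)
lemma tc3 : (clusterOf (twinEdge bE) tpi (ti 5)).ncard ≤ 5 := by
  rw [clusterOf_eq_idx (twinEdge bE) tpi (ti 5) 3 (by decide), tg3]
  exact le_trans (ncard_le_of_subset_finset (F := {(ti 5), (ti 0), (ti 1), (ti 2), (ti 4)}) (by decide)) (by decide)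
lemma tc4 : (clusterOf (twinEdge bE) tpi (ti 4)).ncard ≤ 5 := by
  rw [clusterOf_eq_idx (twinEdge bE) tpi (ti 4) 4 (by decide), tg4]
  exact le_trans (ncard_le_of_subset_finset (F := {(ti 4), (ti 0), (ti 1), (ti 2), (ti 8)}) (by decide)) (by decide)
lemma tc5 : (clusterOf (twinEdge bE) tpi (ti 8)).ncard ≤ 5 := by
  rw [clusterOf_eq_idx (twinEdge bE) tpi (ti 8) 5 (by decide), tg5]
  exact le_trans (ncard_le_of_subset_finset (F := {(ti 8), (ti 0), (ti 1), (ti 2)}) (by decide)) (by decide)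
lemma tc6 : (clusterOf (twinEdge bE) tpi (ti 1)).ncard ≤ 5 := by
  rw [clusterOf_eq_idx (twinEdge bE) tpi (ti 1) 6 (by decide), tg6]
  exact le_trans (ncard_le_of_subset_finset (F := {(ti 1), (ti 0), (ti 2), (tp 3 hint3), (tp 4 hint4)}) (by decide)) (by decide)
lemma tc7 : (clusterOf (twinEdge bE) tpi (tp 3 hint3)).ncard ≤ 5 := by
  rw [clusterOf_eq_idx (twinEdge bE) tpi (tp 3 hint3) 7 (by decide), tg7]
  exact le_trans (ncard_le_of_subset_finset (F := {(tp 3 hint3), (ti 0), (ti 2), (tp 4 hint4), (tp 5 hint5)}) (by decide)) (by decide)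
lemma tc8 : (clusterOf (twinEdge bE) tpi (ti 0)).ncard ≤ 5 := by
  rw [clusterOf_eq_idx (twinEdge bE) tpi (ti 0) 8 (by decide), tg8]
  exact le_trans (ncard_le_of_subset_finset (F := {(ti 0), (ti 2), (tp 4 hint4), (tp 5 hint5), (tp 6 hint6)}) (by decide)) (by decide)
lemma tc9 : (clusterOf (twinEdge bE) tpi (tp 4 hint4)).ncard ≤ 5 := by
  rw [clusterOf_eq_idx (twinEdge bE) tpi (tp 4 hint4) 9 (by decide), tg9]
  exact le_trans (ncard_le_of_subset_finset (F := {(tp 4 hint4), (ti 2), (tp 5 hint5), (tp 6 hint6), (tp 8 hint8)}) (by decide)) (by decide)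
lemma tc10 : (clusterOf (twinEdge bE) tpi (ti 2)).ncard ≤ 5 := by
  rw [clusterOf_eq_idx (twinEdge bE) tpi (ti 2) 10 (by decide), tg10]
  exact le_trans (ncard_le_of_subset_finset (F := {(ti 2), (tp 5 hint5), (tp 6 hint6), (tp 7 hint7), (tp 8 hint8)}) (by decide)) (by decide)
lemma tc11 : (clusterOf (twinEdge bE) tpi (tp 5 hint5)).ncard ≤ 5 := by
  rw [clusterOf_eq_idx (twinEdge bE) tpi (tp 5 hint5) 11 (by decide), tg11]
  exact le_trans (ncard_le_of_subset_finset (F := {(tp 5 hint5), (tp 6 hint6), (tp 7 hint7), (tp 8 hint8)}) (by decide)) (by decide)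
lemma tc12 : (clusterOf (twinEdge bE) tpi (tp 6 hint6)).ncard ≤ 5 := by
  rw [clusterOf_eq_idx (twinEdge bE) tpi (tp 6 hint6) 12 (by decide), tg12]
  exact le_trans (ncard_le_of_subset_finset (F := {(tp 6 hint6), (tp 7 hint7), (tp 8 hint8)}) (by decide)) (by decide)
lemma tc13 : (clusterOf (twinEdge bE) tpi (tp 7 hint7)).ncard ≤ 5 := by
  rw [clusterOf_eq_idx (twinEdge bE) tpi (tp 7 hint7) 13 (by decide), tg13]
  exact le_trans (ncard_le_of_subset_finset (F := {(tp 7 hint7), (tp 8 hint8)}) (by decide)) (by decide)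
lemma tc14 : (clusterOf (twinEdge bE) tpi (tp 8 hint8)).ncard ≤ 5 := by
  rw [clusterOf_eq_idx (twinEdge bE) tpi (tp 8 hint8) 14 (by decide), tg14]
  exact le_trans (ncard_le_of_subset_finset (F := {(tp 8 hint8)}) (by decide)) (by decide)
lemma t_elim : IsElimOrder tpi := ⟨by decide, by decide⟩
lemma t_upper : orderWidth (twinEdge bE) tpi ≤ 4 := by
  apply orderWidth_le' (by decide)
  intro X hX
  fin_cases hX
  · exact tc0
  · exact tc1
  · exact tc2
  · exact tc3
  · exact tc4
  · exact tc5
  · exact tc6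
  · exact tc7
  · exact tc8
  · exact tc9
  · exact tc10
  · exact tc11
  · exact tc12
  · exact tc13
  · exact tc14
lemma t_lower : ∀ σ, IsElimOrder σ → 4 ≤ orderWidth (twinEdge bE) σ := fun σ hσ =>
  orderWidth_ge_of_minDeg (S := {(ti 0), (ti 1), (ti 2), (ti 3), (ti 4), (ti 5), (tp 3 hint3), (tp 4 hint4), (tp 5 hint5)}) (by decide) (by decide) hσ

/-- there is a base network of treewidth `2` whose twin network has
treewidth `4`, i.e. twice the base treewidth. -/
theorem twin_treewidth_can_double :
    ∃ (V : Type) (_ : Fintype V) (E : V → V → Prop),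
      IsAcyclicRel E ∧ treewidthOf E = 2 ∧ treewidthOf (twinEdge E) = 4 := by
  refine ⟨Fin 9, inferInstance, bE, ?_, ?_, ?_⟩
  · exact isAcyclic_of_lt (fun x => x.val) (by decide)
  · exact treewidthOf_eq bpi b_elim b_upper b_lower
  · exact treewidthOf_eq tpi t_elim t_upper t_lower

end Counterfactual
end
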